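/- arXiv:2602.09803 — 8 statements merged into one kernel-verified Lean document; each statement's English description precedes it below -/
import Mathlib

section
/- Let K ≥ 4 be an integer and let m be the least positive integer such that C(m, ⌊m/2⌋) ≥ K. Then m ≤ ⌈log₂ K + (1/2)·log₂ log₂ K + 2⌉. -/
/-!
Write `L = log₂ K` and `n ≥ L + ½ log₂ L + 2`, `k = ⌊n/2⌋`. Since `C(2k, k) ≥ 4^k / (2√k)` and
`C(n, ⌊n/2⌋) ≥ C(2k, k)`, it suffices that `16^k ≥ 4k K²`. With `s = 4k ≥ 2(n - 1)`, this is
`s K² ≤ 2^s`, and at the threshold `s₀ = 2L + log₂ L + 2` we have `2^s₀ = 4L K²` while `s₀ ≤ 4L`;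
beyond it `2^s` outgrows `s`. Hence `⌈L + ½ log₂ L + 2⌉` is an admissible `m`.
-/

open Real

theorem four_pow_le_mul_centralBinom_sq {k : ℕ} (hk : 0 < k) :
    16 ^ k ≤ 4 * k * k.centralBinom ^ 2 := by
  induction k, hk using Nat.le_induction with
  | base => decide
  | succ k hk ih =>
    have hrec : (k + 1) * (k + 1).centralBinom = 2 * (2 * k + 1) * k.centralBinom :=
      Nat.succ_mul_centralBinom_succ k
    refine Nat.le_of_mul_le_mul_left ?_ (by positivity : 0 < (k + 1) ^ 2)
    calc (k + 1) ^ 2 * 16 ^ (k + 1) = (k + 1) ^ 2 * 16 * 16 ^ k := by ring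
      _ ≤ (k + 1) ^ 2 * 16 * (4 * k * k.centralBinom ^ 2) := by gcongr
      _ = 16 * (k + 1) * (4 * k * (k + 1)) * k.centralBinom ^ 2 := by ring
      _ ≤ 16 * (k + 1) * (2 * k + 1) ^ 2 * k.centralBinom ^ 2 := by gcongr; nlinarith
      _ = 4 * (k + 1) * (2 * (2 * k + 1) * k.centralBinom) ^ 2 := by ring
      _ = (k + 1) ^ 2 * (4 * (k + 1) * (k + 1).centralBinom ^ 2) := by rw [← hrec]; ring

theorem one_add_half_mul_le_two_rpow {d : ℝ} (hd : 0 ≤ d) : 1 + d / 2 ≤ (2 : ℝ) ^ d := by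
  have hlog2 : (1 / 2 : ℝ) < log 2 := by linarith [log_two_gt_d9]
  calc 1 + d / 2 ≤ d * log 2 + 1 := by nlinarith
    _ ≤ exp (d * log 2) := add_one_le_exp _
    _ = (2 : ℝ) ^ d := by rw [rpow_def_of_pos two_pos, mul_comm]

theorem logb_two_le_two_mul_sub_two {L : ℝ} (hL : 1 ≤ L) : logb 2 L ≤ 2 * L - 2 := by
  have hlog2 : (1 / 2 : ℝ) < log 2 := by linarith [log_two_gt_d9]
  rw [logb, div_le_iff₀ (by positivity)]
  nlinarith [log_le_sub_one_of_pos (by linarith : (0 : ℝ) < L)]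

theorem one_le_logb_two {x : ℝ} (hx : 2 ≤ x) : 1 ≤ logb 2 x := by
  rwa [← logb_self_eq_one one_lt_two, logb_le_logb one_lt_two two_pos (by linarith)]

theorem mul_sq_le_two_rpow {K s : ℝ} (hK : 2 ≤ K)
    (hs : 2 * logb 2 K + logb 2 (logb 2 K) + 2 ≤ s) : s * K ^ 2 ≤ (2 : ℝ) ^ s := by
  set L := logb 2 K
  have hL : 1 ≤ L := one_le_logb_two hK
  set d := s - (2 * L + logb 2 L + 2)
  have hd : 0 ≤ d := by linarith
  have hpow : (2 : ℝ) ^ s = 4 * L * 2 ^ d * K ^ 2 := by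
    have hsplit : s = L + L + logb 2 L + 2 + d := by ring
    rw [hsplit, rpow_add two_pos, rpow_add two_pos, rpow_add two_pos, rpow_add two_pos,
      rpow_logb two_pos one_lt_two.ne' (by linarith), rpow_logb two_pos one_lt_two.ne' (by linarith),
      rpow_two]
    ring
  have hs_le : s ≤ 4 * L * 2 ^ d :=
    calc s = 2 * L + logb 2 L + 2 + d := by ring
      _ ≤ 4 * L * (1 + d / 2) := by nlinarith [logb_two_le_two_mul_sub_two hL]
      _ ≤ 4 * L * 2 ^ d := by gcongr; exact one_add_half_mul_le_two_rpow hd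
  rw [hpow]
  gcongr

theorem le_choose_div_two_of_logb_add_le {K n : ℕ} (hK : 2 ≤ K)
    (hn : logb 2 K + 1 / 2 * logb 2 (logb 2 K) + 2 ≤ n) : K ≤ n.choose (n / 2) := by
  have hKR : (2 : ℝ) ≤ K := by exact_mod_cast hK
  have hL : 1 ≤ logb 2 (K : ℝ) := one_le_logb_two hKR
  have hloglog : 0 ≤ logb 2 (logb 2 (K : ℝ)) := logb_nonneg one_lt_two hL
  set k := n / 2
  have hn3 : (3 : ℝ) ≤ n := by linarith
  have hk : 0 < k := by
    have : 3 ≤ n := by exact_mod_cast hn3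
    omega
  have hnk : (n : ℝ) ≤ 2 * k + 1 := by exact_mod_cast (by omega : n ≤ 2 * k + 1)
  have hsq : (4 * k : ℝ) * K ^ 2 ≤ 4 * k * (k.centralBinom : ℝ) ^ 2 := by
    calc (4 * k : ℝ) * K ^ 2 ≤ (2 : ℝ) ^ ((4 * k : ℕ) : ℝ) := by
          push_cast; exact mul_sq_le_two_rpow hKR (by linarith)
      _ = ((16 ^ k : ℕ) : ℝ) := by rw [rpow_natCast]; push_cast; rw [pow_mul]; norm_num
      _ ≤ 4 * k * (k.centralBinom : ℝ) ^ 2 := by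
          exact_mod_cast four_pow_le_mul_centralBinom_sq hk
  have hKcb : K ≤ k.centralBinom := by
    have := le_of_mul_le_mul_left hsq (by positivity)
    exact_mod_cast (pow_le_pow_iff_left₀ (by positivity) (by positivity) two_ne_zero).mp this
  exact hKcb.trans (Nat.choose_le_choose k (by omega))

theorem stmt_1_general (K m : ℕ) (hK : 4 ≤ K)
    (hleast : ∀ m' : ℕ, 0 < m' → K ≤ m'.choose (m' / 2) → m ≤ m') :
    (m : ℤ) ≤ ⌈Real.logb 2 K + (1 / 2) * Real.logb 2 (Real.logb 2 K) + 2⌉ := by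
  set x := Real.logb 2 K + (1 / 2) * Real.logb 2 (Real.logb 2 K) + 2
  set n := ⌈x⌉.toNat
  have hxn : x ≤ n := by
    calc x ≤ ⌈x⌉ := Int.le_ceil x
      _ ≤ n := by exact_mod_cast Int.self_le_toNat _
  have hKn : K ≤ n.choose (n / 2) := le_choose_div_two_of_logb_add_le (by omega) hxn
  have hn : 0 < n := Nat.pos_of_ne_zero fun h => by simp [h] at hKn; omega
  have hmn : m ≤ n := hleast n hn hKn
  omega

theorem stmt_1 (K m : ℕ) (hK : 4 ≤ K) (hm : 0 < m)
    (hge : K ≤ m.choose (m / 2))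
    (hleast : ∀ m' : ℕ, 0 < m' → K ≤ m'.choose (m' / 2) → m ≤ m') :
    (m : ℤ) ≤ ⌈Real.logb 2 K + (1 / 2) * Real.logb 2 (Real.logb 2 K) + 2⌉ :=
  stmt_1_general K m hK hleast
end

section
/- Let m ≥ 4, set ℓ = ⌊m/2⌋, let V₀ be a set of size m, let b ∉ V₀, and put V = V₀ ∪ {b}. Let K be an integer with K ≥ ℓ+1 and K − (ℓ+1) ≤ C(m, ℓ). Then there exist sets L_t ⊆ V for each integer t with 4 ≤ t ≤ K such that: (i) |L_t| = 2 for 4 ≤ t ≤ ℓ+1, these L_t are pairwise distinct and all contain b; (ii) |L_t| = ℓ for ℓ+2 ≤ t ≤ K, these L_t are pairwise distinct and all contained in V₀; and (iii) the family {L_t : 4 ≤ t ≤ K} is an antichain under inclusion. -/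
/-!
Take the pairs `{b, x}` for distinct `x ∈ V₀` and then distinct `ℓ`-subsets of `V₀`; there are
enough of each because `ℓ - 2 ≤ m` and `K - (ℓ + 1) ≤ C(m, ℓ)`. Distinct sets of the same size
are incomparable, a pair is not inside an `ℓ`-set because only the pair contains `b`, and an
`ℓ`-set is not inside a pair `{b, x}` because it avoids `b` and has at least two elements
(a pair index `t` with `4 ≤ t ≤ ℓ + 1` forces `ℓ ≥ 3`).
-/

open Finset

theorem Finset.exists_mapsTo_injOn_of_card_le {α β : Type*} [Nonempty β] {s : Finset α}
    {t : Finset β} (h : #s ≤ #t) : ∃ f : α → β, Set.MapsTo f s t ∧ Set.InjOn f s :=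
  s.finite_toSet.exists_injOn_of_encard_le (t := (t : Set β))
    (by simpa [Set.encard_coe_eq_coe_finsetCard] using h)

section PairsThenLayer

variable {α : Type*} [DecidableEq α]

theorem Finset.eq_of_pair_subset_pair {b x y : α} (hx : x ≠ b)
    (h : {b, x} ⊆ ({b, y} : Finset α)) : x = y := by
  have hmem := h (mem_insert_of_mem (mem_singleton_self x))
  simpa [hx] using hmem

theorem Finset.not_subset_pair {b x : α} {s : Finset α} (hb : b ∉ s) (hs : 2 ≤ #s) :
    ¬ s ⊆ {b, x} := by
  intro h
  have := card_le_card ((subset_insert_iff_of_notMem hb).mp h)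
  rw [card_singleton] at this
  omega

def pairsThenLayer (b : α) (f : ℕ → α) (g : ℕ → Finset α) (ℓ t : ℕ) : Finset α :=
  if t ≤ ℓ + 1 then {b, f t} else g t

variable {b : α} {f : ℕ → α} {g : ℕ → Finset α} {ℓ t : ℕ}

theorem pairsThenLayer_of_le (ht : t ≤ ℓ + 1) : pairsThenLayer b f g ℓ t = {b, f t} :=
  if_pos ht

theorem pairsThenLayer_of_lt (ht : ℓ + 1 < t) : pairsThenLayer b f g ℓ t = g t :=
  if_neg (by omega)

theorem pairsThenLayer_not_subset {V₀ : Finset α} {K : ℕ} (hb : b ∉ V₀)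
    (hf : Set.MapsTo f (Icc 4 (ℓ + 1)) V₀) (hf_inj : Set.InjOn f (Icc 4 (ℓ + 1)))
    (hg : Set.MapsTo g (Icc (ℓ + 2) K) (V₀.powersetCard ℓ))
    (hg_inj : Set.InjOn g (Icc (ℓ + 2) K)) :
    ∀ t ∈ Icc 4 K, ∀ t' ∈ Icc 4 K, t ≠ t' →
      ¬ pairsThenLayer b f g ℓ t ⊆ pairsThenLayer b f g ℓ t' := by
  intro t ht t' ht' hne
  rw [mem_Icc] at ht ht'
  have hfb {s : ℕ} (h4 : 4 ≤ s) (hs : s ≤ ℓ + 1) : f s ≠ b :=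
    fun h => hb (h ▸ hf (mem_Icc.mpr ⟨h4, hs⟩))
  have hgV {s : ℕ} (hs : ℓ + 1 < s) (hK : s ≤ K) : g s ⊆ V₀ ∧ #(g s) = ℓ :=
    mem_powersetCard.mp (hg (mem_Icc.mpr ⟨hs, hK⟩))
  rcases le_or_gt t (ℓ + 1) with hpair | hlayer <;>
    rcases le_or_gt t' (ℓ + 1) with hpair' | hlayer'
  · rw [pairsThenLayer_of_le hpair, pairsThenLayer_of_le hpair']
    exact fun h => hne <| hf_inj (mem_Icc.mpr ⟨ht.1, hpair⟩) (mem_Icc.mpr ⟨ht'.1, hpair'⟩)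
      (eq_of_pair_subset_pair (hfb ht.1 hpair) h)
  · rw [pairsThenLayer_of_le hpair, pairsThenLayer_of_lt hlayer']
    exact fun h => hb ((hgV hlayer' ht'.2).1 (h (mem_insert_self b _)))
  · rw [pairsThenLayer_of_lt hlayer, pairsThenLayer_of_le hpair']
    obtain ⟨hsub, hcard⟩ := hgV hlayer ht.2
    exact not_subset_pair (fun h => hb (hsub h)) (by omega)
  · rw [pairsThenLayer_of_lt hlayer, pairsThenLayer_of_lt hlayer']
    intro h
    refine hne <| hg_inj (mem_Icc.mpr ⟨hlayer, ht.2⟩) (mem_Icc.mpr ⟨hlayer', ht'.2⟩)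
      (eq_of_subset_of_card_le h ?_)
    rw [(hgV hlayer ht.2).2, (hgV hlayer' ht'.2).2]

end PairsThenLayer

theorem stmt_3_general {α : Type*} [DecidableEq α] (m K : ℕ)
    (ℓ : ℕ) (hℓ : ℓ = m / 2)
    (V₀ : Finset α) (hV₀ : V₀.card = m) (b : α) (hb : b ∉ V₀)
    (V : Finset α) (hV : V = insert b V₀)
    (hK2 : K - (ℓ + 1) ≤ m.choose ℓ) :
    ∃ L : ℕ → Finset α,
      (∀ t ∈ Finset.Icc 4 K, L t ⊆ V) ∧
      (∀ t ∈ Finset.Icc 4 (ℓ + 1), (L t).card = 2 ∧ b ∈ L t) ∧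
      (∀ t ∈ Finset.Icc (ℓ + 2) K, (L t).card = ℓ ∧ L t ⊆ V₀) ∧
      (∀ t ∈ Finset.Icc 4 K, ∀ t' ∈ Finset.Icc 4 K, L t = L t' → t = t') ∧
      (∀ t ∈ Finset.Icc 4 K, ∀ t' ∈ Finset.Icc 4 K, t ≠ t' → ¬ L t ⊆ L t') := by
  have : Nonempty α := ⟨b⟩
  obtain ⟨f, hf, hf_inj⟩ := exists_mapsTo_injOn_of_card_le (s := Icc 4 (ℓ + 1)) (t := V₀)
    (by rw [Nat.card_Icc, hV₀]; omega)
  obtain ⟨g, hg, hg_inj⟩ := exists_mapsTo_injOn_of_card_le (s := Icc (ℓ + 2) K)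
    (t := V₀.powersetCard ℓ) (by rw [Nat.card_Icc, card_powersetCard, hV₀]; omega)
  have antichain := pairsThenLayer_not_subset hb hf hf_inj hg hg_inj
  refine ⟨pairsThenLayer b f g ℓ, fun t ht => ?_, fun t ht => ?_, fun t ht => ?_,
    fun t ht t' ht' h => by_contra fun hne => antichain t ht t' ht' hne h.le, antichain⟩
  · rw [hV]
    rcases le_or_gt t (ℓ + 1) with hpair | hlayer
    · rw [pairsThenLayer_of_le hpair]
      exact insert_subset_insert b
        (singleton_subset_iff.mpr (hf (mem_Icc.mpr ⟨(mem_Icc.mp ht).1, hpair⟩)))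
    · rw [pairsThenLayer_of_lt hlayer]
      exact (mem_powersetCard.mp (hg (mem_Icc.mpr ⟨hlayer, (mem_Icc.mp ht).2⟩))).1.trans
        (subset_insert b V₀)
  · rw [pairsThenLayer_of_le (mem_Icc.mp ht).2]
    exact ⟨card_pair fun h => hb (h ▸ hf ht), mem_insert_self b _⟩
  · rw [pairsThenLayer_of_lt (mem_Icc.mp ht).1]
    exact (mem_powersetCard.mp (hg ht)).symm

theorem stmt_3 {α : Type*} [DecidableEq α] (m K : ℕ) (hm : 4 ≤ m)
    (ℓ : ℕ) (hℓ : ℓ = m / 2)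
    (V₀ : Finset α) (hV₀ : V₀.card = m) (b : α) (hb : b ∉ V₀)
    (V : Finset α) (hV : V = insert b V₀)
    (hK1 : ℓ + 1 ≤ K) (hK2 : K - (ℓ + 1) ≤ m.choose ℓ) :
    ∃ L : ℕ → Finset α,
      (∀ t ∈ Finset.Icc 4 K, L t ⊆ V) ∧
      (∀ t ∈ Finset.Icc 4 (ℓ + 1), (L t).card = 2 ∧ b ∈ L t) ∧
      (∀ t ∈ Finset.Icc (ℓ + 2) K, (L t).card = ℓ ∧ L t ⊆ V₀) ∧
      (∀ t ∈ Finset.Icc 4 K, ∀ t' ∈ Finset.Icc 4 K, L t = L t' → t = t') ∧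
      (∀ t ∈ Finset.Icc 4 K, ∀ t' ∈ Finset.Icc 4 K, t ≠ t' → ¬ L t ⊆ L t') :=
  stmt_3_general m K ℓ hℓ V₀ hV₀ b hb V hV hK2
end

section
/- Let r ≥ 2 and n ≥ 4 be integers. Then every r-multiplicity antichain F ⊆ 2^[n] satisfies |S(F)| ≤ n − 3. Equivalently, g(n, r) ≤ n − 3. -/
/-!
Sizes `0` and `n` each admit only one set, so they never occur. If two singletons `{a}, {b}`
occur, the antichain condition pushes every other member into `{a, b}ᶜ`, a set of size `n - 2`,
so the sizes `n - 2` and `n - 1` cannot occur twice and all sizes lie in `[1, n - 3]`. Dually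
(pass to complements), if size `n - 1` occurs then all sizes lie in `[3, n - 1]`; otherwise they
lie in `[2, n - 2]`.
-/

open Finset

namespace Finset

variable {α : Type*} {F : Finset (Finset α)}

/-- The multiplicity condition with `r = 2`. -/
def CardsRepeated (F : Finset (Finset α)) : Prop :=
  ∀ A ∈ F, ∃ B ∈ F, B ≠ A ∧ #B = #A

theorem card_image_card_le_of_forall_mem_Icc {lo hi : ℕ} (h : ∀ A ∈ F, #A ∈ Icc lo hi) :
    #(F.image card) ≤ hi + 1 - lo := by
  simpa using card_le_card (image_subset_iff.mpr h)

namespace CardsRepeated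

theorem card_ne_of_forall_card_eq_eq (hF : F.CardsRepeated) {X : Finset α} {t : ℕ}
    (hX : ∀ B ∈ F, #B = t → B = X) : ∀ A ∈ F, #A ≠ t := by
  intro A hA hAt
  obtain ⟨B, hB, hBA, hBt⟩ := hF A hA
  exact hBA ((hX B hB (hBt.trans hAt)).trans (hX A hA hAt).symm)

theorem card_pos (hF : F.CardsRepeated) : ∀ A ∈ F, 0 < #A :=
  fun A hA => Nat.pos_of_ne_zero <|
    hF.card_ne_of_forall_card_eq_eq (fun _ _ => card_eq_zero.mp) A hA

theorem card_lt_card_univ [Fintype α] (hF : F.CardsRepeated) :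
    ∀ A ∈ F, #A < Fintype.card α :=
  fun A hA => (card_le_univ A).lt_of_ne <|
    hF.card_ne_of_forall_card_eq_eq (fun B _ => eq_univ_of_card B) A hA

variable [Fintype α] [DecidableEq α]

theorem image_compl (hF : F.CardsRepeated) : (F.image compl).CardsRepeated := by
  simp only [CardsRepeated, mem_image]
  rintro _ ⟨A, hA, rfl⟩
  obtain ⟨B, hB, hBA, hBcard⟩ := hF A hA
  exact ⟨Bᶜ, ⟨B, hB, rfl⟩, compl_injective.ne hBA, by simp [card_compl, hBcard]⟩

theorem card_le_card_univ_sub_three_of_card_eq_one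
    (hanti : IsAntichain (· ⊆ ·) (F : Set (Finset α))) (hF : F.CardsRepeated)
    (hα : 4 ≤ Fintype.card α) {A₀ : Finset α} (hA₀ : A₀ ∈ F) (hA₀card : #A₀ = 1) :
    ∀ A ∈ F, #A ≤ Fintype.card α - 3 := by
  obtain ⟨B₀, hB₀, hB₀A₀, hB₀card⟩ := hF A₀ hA₀
  obtain ⟨a, rfl⟩ := card_eq_one.mp hA₀card
  obtain ⟨b, rfl⟩ := card_eq_one.mp (hB₀card.trans hA₀card)
  have hab : a ≠ b := by rintro rfl; exact hB₀A₀ rfl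
  have hsub : ∀ C ∈ F, 2 ≤ #C → C ⊆ {a, b}ᶜ := by
    intro C hC hCcard x hxC
    have hne : C ≠ {x} := by rintro rfl; simp at hCcard
    simp only [mem_compl, mem_insert, mem_singleton]
    rintro (rfl | rfl)
    · exact hanti hA₀ hC hne.symm (singleton_subset_iff.mpr hxC)
    · exact hanti hB₀ hC hne.symm (singleton_subset_iff.mpr hxC)
  have hcompl : #({a, b}ᶜ : Finset α) = Fintype.card α - 2 := by
    rw [card_compl, card_pair hab]
  intro C hC
  by_contra! hCcard
  refine hF.card_ne_of_forall_card_eq_eq (X := {a, b}ᶜ) (fun D hD hDC => ?_) C hC rfl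
  exact eq_of_subset_of_card_le (hsub D hD (by omega)) (by omega)

theorem three_le_card_of_card_eq_card_univ_sub_one
    (hanti : IsAntichain (· ⊆ ·) (F : Set (Finset α))) (hF : F.CardsRepeated)
    (hα : 4 ≤ Fintype.card α) {A₀ : Finset α} (hA₀ : A₀ ∈ F)
    (hA₀card : #A₀ = Fintype.card α - 1) :
    ∀ A ∈ F, 3 ≤ #A := by
  have hanti' : IsAntichain (· ⊆ ·) (F.image compl : Set (Finset α)) := by
    rw [coe_image]
    exact hanti.image_compl
  have hle := hF.image_compl.card_le_card_univ_sub_three_of_card_eq_one hanti' hα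
    (mem_image_of_mem _ hA₀) (by rw [card_compl, hA₀card]; omega)
  intro A hA
  have hAc := hle Aᶜ (mem_image_of_mem _ hA)
  rw [card_compl] at hAc
  have := hF.card_lt_card_univ A hA
  omega

theorem card_image_card_le_card_univ_sub_three
    (hanti : IsAntichain (· ⊆ ·) (F : Set (Finset α))) (hF : F.CardsRepeated)
    (hα : 4 ≤ Fintype.card α) :
    #(F.image card) ≤ Fintype.card α - 3 := by
  have hpos := hF.card_pos
  have hlt := hF.card_lt_card_univ
  by_cases h₁ : ∃ A ∈ F, #A = 1
  · obtain ⟨A₀, hA₀, hA₀card⟩ := h₁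
    have hle := hF.card_le_card_univ_sub_three_of_card_eq_one hanti hα hA₀ hA₀card
    refine (card_image_card_le_of_forall_mem_Icc (lo := 1) (hi := Fintype.card α - 3)
      fun A hA => mem_Icc.mpr ⟨hpos A hA, hle A hA⟩).trans (by omega)
  by_cases h₂ : ∃ A ∈ F, #A = Fintype.card α - 1
  · obtain ⟨A₀, hA₀, hA₀card⟩ := h₂
    have hge := hF.three_le_card_of_card_eq_card_univ_sub_one hanti hα hA₀ hA₀card
    refine (card_image_card_le_of_forall_mem_Icc (lo := 3) (hi := Fintype.card α - 1)
      fun A hA => mem_Icc.mpr ⟨hge A hA, by have := hlt A hA; omega⟩).trans (by omega)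
  push Not at h₁ h₂
  refine (card_image_card_le_of_forall_mem_Icc (lo := 2) (hi := Fintype.card α - 2)
    fun A hA => mem_Icc.mpr ⟨?_, ?_⟩).trans (by omega)
  · have := hpos A hA; have := h₁ A hA; omega
  · have := hlt A hA; have := h₂ A hA; omega

end CardsRepeated

end Finset

theorem stmt_4 (n r : ℕ) (hr : 2 ≤ r) (hn : 4 ≤ n)
    (F : Finset (Finset (Fin n)))
    (hanti : ∀ A ∈ F, ∀ B ∈ F, A ≠ B → ¬ A ⊆ B)
    (hmult : ∀ t ∈ F.image Finset.card,
      r ≤ (F.filter (fun A => A.card = t)).card) :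
    (F.image Finset.card).card ≤ n - 3 := by
  have hF : F.CardsRepeated := by
    intro A hA
    have hrA := hmult _ (mem_image_of_mem _ hA)
    obtain ⟨B, hB, hBA⟩ := exists_mem_ne (by omega : 1 < #(F.filter (#· = #A))) A
    exact ⟨B, (mem_filter.mp hB).1, hBA, (mem_filter.mp hB).2⟩
  simpa using hF.card_image_card_le_card_univ_sub_three hanti (by simpa using hn)
end

section
/- Let r ≥ 4 and let n be an integer with r + 3 ≤ n ≤ 2r + 2. Then every r-multiplicity antichain F ⊆ 2^[n] satisfies |S(F)| ≤ n − 4. -/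
private lemma card_triple_le {β : Type*} [DecidableEq β] (a b c : β) :
    ({a, b, c} : Finset β).card ≤ 3 := by
  apply le_trans (Finset.card_insert_le _ _)
  have := Finset.card_insert_le b ({c} : Finset β)
  simp at this ⊢
  omega

private lemma card_quad_le {β : Type*} [DecidableEq β] (a b c d : β) :
    ({a, b, c, d} : Finset β).card ≤ 4 := by
  apply le_trans (Finset.card_insert_le _ _)
  have := card_triple_le b c d
  omega

private lemma other_elt {α : Type*} [DecidableEq α] {e : Finset α} {v : α}
    (h2 : e.card = 2) (hv : v ∈ e) : ∃ x, x ≠ v ∧ e = {v, x} := by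
  have h1 : (e.erase v).card = 1 := by rw [Finset.card_erase_of_mem hv, h2]
  obtain ⟨x, hx⟩ := Finset.card_eq_one.mp h1
  refine ⟨x, ?_, ?_⟩
  · have : x ∈ e.erase v := by rw [hx]; exact Finset.mem_singleton_self x
    exact (Finset.mem_erase.mp this).1
  · rw [← Finset.insert_erase hv, hx]

private lemma cross_decomp {α : Type*} [DecidableEq α] {e f g : Finset α}
    (hg : g.card = 2) (hef : Disjoint e f)
    (hge : ¬ Disjoint g e) (hgf : ¬ Disjoint g f) :
    ∃ x ∈ e, ∃ y ∈ f, g = {x, y} := by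
  obtain ⟨x, hxg, hxe⟩ := Finset.not_disjoint_iff.mp hge
  obtain ⟨y, hyg, hyf⟩ := Finset.not_disjoint_iff.mp hgf
  have hxy : x ≠ y := fun h => (Finset.disjoint_left.mp hef hxe) (h ▸ hyf)
  have hsub : ({x, y} : Finset α) ⊆ g := by
    intro z hz
    rcases Finset.mem_insert.mp hz with h | h
    · exact h ▸ hxg
    · exact (Finset.mem_singleton.mp h) ▸ hyg
  exact ⟨x, hxe, y, hyf,
    (Finset.eq_of_subset_of_card_le hsub (by rw [hg, Finset.card_pair hxy])).symm⟩

private lemma star_lemma {α : Type*} [DecidableEq α] (G H : Finset (Finset α))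
    (hG : 4 ≤ G.card) (hH : 3 ≤ H.card)
    (hG2 : ∀ e ∈ G, e.card = 2) (hH2 : ∀ f ∈ H, f.card = 2)
    (cross : ∀ e ∈ G, ∀ f ∈ H, ¬ Disjoint e f) :
    ∃ v, (∀ e ∈ G, v ∈ e) ∧ (∀ f ∈ H, v ∈ f) := by
  -- First: any two members of H intersect.
  have Hint : ∀ f₁ ∈ H, ∀ f₂ ∈ H, ¬ Disjoint f₁ f₂ := by
    intro f₁ hf₁ f₂ hf₂ hd
    obtain ⟨x₁, x₂, hx12, hf₁eq⟩ := Finset.card_eq_two.mp (hH2 f₁ hf₁)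
    obtain ⟨y₁, y₂, hy12, hf₂eq⟩ := Finset.card_eq_two.mp (hH2 f₂ hf₂)
    subst hf₁eq; subst hf₂eq
    have hdl := Finset.disjoint_left.mp hd
    have hx1 : x₁ ∈ ({x₁, x₂} : Finset α) := by simp
    have hx2 : x₂ ∈ ({x₁, x₂} : Finset α) := by simp
    have hny1 : y₁ ∉ ({x₁, x₂} : Finset α) := by
      intro h; exact Finset.disjoint_right.mp hd (by simp) h
    have hny2 : y₂ ∉ ({x₁, x₂} : Finset α) := by
      intro h; exact Finset.disjoint_right.mp hd (by simp : y₂ ∈ ({y₁, y₂} : Finset α)) h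
    have hx1y1 : x₁ ≠ y₁ := by intro h; exact hny1 (h ▸ hx1)
    have hx1y2 : x₁ ≠ y₂ := by intro h; exact hny2 (h ▸ hx1)
    have hx2y1 : x₂ ≠ y₁ := by intro h; exact hny1 (h ▸ hx2)
    have hx2y2 : x₂ ≠ y₂ := by intro h; exact hny2 (h ▸ hx2)
    -- every g in G is a crossing pair
    have hdec : ∀ g ∈ G, ∃ x ∈ ({x₁, x₂} : Finset α), ∃ y ∈ ({y₁, y₂} : Finset α), g = {x, y} := by
      intro g hg
      exact cross_decomp (hG2 g hg) hd
        (cross g hg _ hf₁) (cross g hg _ hf₂)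
    have hGsub : G ⊆ ({({x₁,y₁} : Finset α), {x₁,y₂}, {x₂,y₁}, {x₂,y₂}} : Finset (Finset α)) := by
      intro g hg
      obtain ⟨x, hx, y, hy, hgeq⟩ := hdec g hg
      simp only [Finset.mem_insert, Finset.mem_singleton] at hx hy ⊢
      rcases hx with h | h <;> rcases hy with h' | h' <;> subst h <;> subst h' <;> tauto
    have hGeq := Finset.eq_of_subset_of_card_le hGsub (le_trans (card_quad_le _ _ _ _) hG)
    have hg11 : ({x₁,y₁} : Finset α) ∈ G := by rw [hGeq]; simp
    have hg12 : ({x₁,y₂} : Finset α) ∈ G := by rw [hGeq]; simp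
    have hg21 : ({x₂,y₁} : Finset α) ∈ G := by rw [hGeq]; simp
    have hg22 : ({x₂,y₂} : Finset α) ∈ G := by rw [hGeq]; simp
    have hd1 : Disjoint ({x₁,y₁} : Finset α) ({x₂,y₂} : Finset α) := by
      rw [Finset.disjoint_left]; intro a ha hb
      simp only [Finset.mem_insert, Finset.mem_singleton] at ha hb
      rcases ha with rfl|rfl <;> rcases hb with h|h <;> simp_all
    have hd2 : Disjoint ({x₂,y₁} : Finset α) ({x₁,y₂} : Finset α) := by
      rw [Finset.disjoint_left]; intro a ha hb
      simp only [Finset.mem_insert, Finset.mem_singleton] at ha hb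
      rcases ha with rfl|rfl <;> rcases hb with h|h <;> simp_all
    have hHsub : H ⊆ ({({x₁,x₂} : Finset α), {y₁,y₂}} : Finset (Finset α)) := by
      intro f hf
      obtain ⟨u₁, hu₁, u₂, hu₂, hfeq⟩ := cross_decomp (hH2 f hf) hd1
        (fun h => cross _ hg11 f hf h.symm) (fun h => cross _ hg22 f hf h.symm)
      simp only [Finset.mem_insert, Finset.mem_singleton] at hu₁ hu₂ ⊢
      rcases hu₁ with h1|h1 <;> rcases hu₂ with h2|h2
      · left; rw [hfeq, h1, h2]
      · exfalso
        apply cross _ hg21 f hf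
        rw [hfeq, h1, h2]
        exact hd2
      · exfalso
        apply cross _ hg12 f hf
        rw [hfeq, h1, h2, Finset.pair_comm y₁ x₂]
        exact hd2.symm
      · right; rw [hfeq, h1, h2]
    have h2le : ({({x₁,x₂} : Finset α), {y₁,y₂}} : Finset (Finset α)).card ≤ 2 :=
      (Finset.card_insert_le _ _).trans (by simp)
    have := (Finset.card_le_card hHsub).trans h2le
    omega
  -- pick three distinct members of H
  obtain ⟨f₁, hf₁⟩ := Finset.card_pos.mp (by omega : 0 < H.card)
  obtain ⟨f₂, hf₂'⟩ := Finset.card_pos.mp (by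
    rw [Finset.card_erase_of_mem hf₁]; omega : 0 < (H.erase f₁).card)
  obtain ⟨f₂ne, hf₂⟩ := Finset.mem_erase.mp hf₂'
  obtain ⟨f₃, hf₃'⟩ := Finset.card_pos.mp (by
    rw [Finset.card_erase_of_mem hf₂', Finset.card_erase_of_mem hf₁]
    omega : 0 < ((H.erase f₁).erase f₂).card)
  obtain ⟨f₃ne2, hf₃''⟩ := Finset.mem_erase.mp hf₃'
  obtain ⟨f₃ne1, hf₃⟩ := Finset.mem_erase.mp hf₃''
  obtain ⟨w, hwf₁, hwf₂⟩ := Finset.not_disjoint_iff.mp (Hint f₁ hf₁ f₂ hf₂)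
  by_cases hw3 : w ∈ f₃
  · -- common vertex w of f₁ f₂ f₃ : every g ∈ G contains w
    obtain ⟨z₁, hz₁, hf₁eq⟩ := other_elt (hH2 f₁ hf₁) hwf₁
    obtain ⟨z₂, hz₂, hf₂eq⟩ := other_elt (hH2 f₂ hf₂) hwf₂
    obtain ⟨z₃, hz₃, hf₃eq⟩ := other_elt (hH2 f₃ hf₃) hw3
    have hz12 : z₁ ≠ z₂ := by
      intro h; apply f₂ne; rw [hf₂eq, hf₁eq, h]
    have hz13 : z₁ ≠ z₃ := by
      intro h; apply f₃ne1; rw [hf₃eq, hf₁eq, h]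
    have hz23 : z₂ ≠ z₃ := by
      intro h; apply f₃ne2; rw [hf₃eq, hf₂eq, h]
    have hGw : ∀ g ∈ G, w ∈ g := by
      intro g hg
      by_contra hwg
      have hmem : ∀ (f : Finset α), f ∈ H → ∀ z : α, z ≠ w → f = {w, z} → z ∈ g := by
        intro f hf z hzw hfeq
        obtain ⟨c, hcg, hcf⟩ := Finset.not_disjoint_iff.mp (cross g hg f hf)
        rw [hfeq] at hcf
        simp only [Finset.mem_insert, Finset.mem_singleton] at hcf
        rcases hcf with rfl|rfl
        · exact absurd hcg hwg
        · exact hcg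
      have h1 := hmem f₁ hf₁ z₁ hz₁ hf₁eq
      have h2 := hmem f₂ hf₂ z₂ hz₂ hf₂eq
      have h3 := hmem f₃ hf₃ z₃ hz₃ hf₃eq
      have hsub : ({z₁, z₂, z₃} : Finset α) ⊆ g := by
        intro a ha
        simp only [Finset.mem_insert, Finset.mem_singleton] at ha
        rcases ha with rfl|rfl|rfl <;> assumption
      have hcard : ({z₁, z₂, z₃} : Finset α).card = 3 := by
        rw [Finset.card_insert_of_notMem (by simp [hz12, hz13]),
          Finset.card_insert_of_notMem (by simp [hz23]), Finset.card_singleton]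
      have := Finset.card_le_card hsub
      rw [hcard, hG2 g hg] at this
      omega
    refine ⟨w, hGw, ?_⟩
    -- every f ∈ H contains w
    intro f hf
    by_contra hwf
    have hmap : ∀ e ∈ G, e.erase w ∈ f.powersetCard 1 := by
      intro e he
      rw [Finset.mem_powersetCard]
      constructor
      · intro x hx
        obtain ⟨hxw, hxe⟩ := Finset.mem_erase.mp hx
        obtain ⟨c, hce, hcf⟩ := Finset.not_disjoint_iff.mp (cross e he f hf)
        obtain ⟨x', hx'w, heeq⟩ := other_elt (hG2 e he) (hGw e he)
        have hcx : c = x' := by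
          rw [heeq] at hce
          simp only [Finset.mem_insert, Finset.mem_singleton] at hce
          rcases hce with rfl|rfl
          · exact absurd hcf hwf
          · rfl
        have : x = x' := by
          rw [heeq] at hxe
          simp only [Finset.mem_insert, Finset.mem_singleton] at hxe
          tauto
        rw [this, ← hcx]; exact hcf
      · rw [Finset.card_erase_of_mem (hGw e he), hG2 e he]
    have hinj : Set.InjOn (fun (e : Finset α) => e.erase w) ↑G := by
      intro e he e' he' h
      simp only at h
      have h2 := congrArg (insert w) h
      rwa [Finset.insert_erase (hGw e (Finset.mem_coe.mp he)),
        Finset.insert_erase (hGw e' (Finset.mem_coe.mp he'))] at h2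
    have := Finset.card_le_card_of_injOn _ hmap hinj
    rw [Finset.card_powersetCard, hH2 f hf] at this
    simp [Nat.choose] at this
    omega
  · -- triangle case: contradiction
    exfalso
    obtain ⟨a, haw, hf₁eq⟩ := other_elt (hH2 f₁ hf₁) hwf₁
    obtain ⟨b, hbw, hf₂eq⟩ := other_elt (hH2 f₂ hf₂) hwf₂
    have hab : a ≠ b := by
      intro h; apply f₂ne; rw [hf₂eq, hf₁eq, h]
    have haf₃ : a ∈ f₃ := by
      obtain ⟨c, hc3, hc1⟩ := Finset.not_disjoint_iff.mp (Hint f₃ hf₃ f₁ hf₁)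
      rw [hf₁eq] at hc1
      simp only [Finset.mem_insert, Finset.mem_singleton] at hc1
      rcases hc1 with rfl|rfl
      · exact absurd hc3 hw3
      · exact hc3
    have hbf₃ : b ∈ f₃ := by
      obtain ⟨c, hc3, hc2⟩ := Finset.not_disjoint_iff.mp (Hint f₃ hf₃ f₂ hf₂)
      rw [hf₂eq] at hc2
      simp only [Finset.mem_insert, Finset.mem_singleton] at hc2
      rcases hc2 with rfl|rfl
      · exact absurd hc3 hw3
      · exact hc3
    have hf₃eq : f₃ = {a, b} := by
      refine (Finset.eq_of_subset_of_card_le ?_ ?_).symm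
      · intro z hz
        simp only [Finset.mem_insert, Finset.mem_singleton] at hz
        rcases hz with rfl|rfl <;> assumption
      · rw [hH2 f₃ hf₃, Finset.card_pair hab]
    have hGsub : G ⊆ ({({w,a} : Finset α), {w,b}, {a,b}} : Finset (Finset α)) := by
      intro g hg
      by_cases hwg : w ∈ g
      · obtain ⟨c, hcw, hgeq⟩ := other_elt (hG2 g hg) hwg
        obtain ⟨d, hd3, hdg⟩ := Finset.not_disjoint_iff.mp (by
          intro h; exact cross g hg f₃ hf₃ h.symm : ¬ Disjoint f₃ g)
        rw [hf₃eq] at hd3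
        rw [hgeq] at hdg
        simp only [Finset.mem_insert, Finset.mem_singleton] at hd3 hdg ⊢
        rcases hd3 with h3|h3 <;> rcases hdg with hg'|hg'
        · exfalso; apply hw3; rw [hg'.symm.trans h3]; exact haf₃
        · left; rw [hgeq, hg'.symm.trans h3]
        · exfalso; apply hw3; rw [hg'.symm.trans h3]; exact hbf₃
        · right; left; rw [hgeq, hg'.symm.trans h3]
      · have hag : a ∈ g := by
          obtain ⟨c, hcg, hc1⟩ := Finset.not_disjoint_iff.mp (cross g hg f₁ hf₁)
          rw [hf₁eq] at hc1
          simp only [Finset.mem_insert, Finset.mem_singleton] at hc1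
          rcases hc1 with rfl|rfl
          · exact absurd hcg hwg
          · exact hcg
        have hbg : b ∈ g := by
          obtain ⟨c, hcg, hc2⟩ := Finset.not_disjoint_iff.mp (cross g hg f₂ hf₂)
          rw [hf₂eq] at hc2
          simp only [Finset.mem_insert, Finset.mem_singleton] at hc2
          rcases hc2 with rfl|rfl
          · exact absurd hcg hwg
          · exact hcg
        have : g = {a, b} := by
          refine (Finset.eq_of_subset_of_card_le ?_ ?_).symm
          · intro z hz
            simp only [Finset.mem_insert, Finset.mem_singleton] at hz
            rcases hz with rfl|rfl <;> assumption
          · rw [hG2 g hg, Finset.card_pair hab]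
        simp [this]
    have := (Finset.card_le_card hGsub).trans (card_triple_le _ _ _)
    omega

theorem stmt_9 (n r : ℕ) (hr : 4 ≤ r) (hn1 : r + 3 ≤ n) (hn2 : n ≤ 2 * r + 2)
    (F : Finset (Finset (Fin n)))
    (hanti : ∀ A ∈ F, ∀ B ∈ F, A ≠ B → ¬ A ⊆ B)
    (hmult : ∀ t ∈ F.image Finset.card,
      r ≤ (F.filter (fun A => A.card = t)).card) :
    (F.image Finset.card).card ≤ n - 4 := by
  classical
  by_contra hcon
  push_neg at hcon
  set S := F.image Finset.card with hSdef
  have hn7 : 7 ≤ n := by omega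
  have hScard : n - 3 ≤ S.card := by omega
  have hwit : ∀ t ∈ S, ∃ A ∈ F, A.card = t := by
    intro t ht
    obtain ⟨A, hA, hAc⟩ := Finset.mem_image.mp ht
    exact ⟨A, hA, hAc⟩
  have hle : ∀ t ∈ S, t ≤ n := by
    intro t ht
    obtain ⟨A, _, hAc⟩ := hwit t ht
    rw [← hAc]
    exact le_trans (Finset.card_le_univ A) (by simp)
  have h0 : (0:ℕ) ∉ S := by
    intro h0S
    have hm := hmult 0 h0S
    have hsub : F.filter (fun A => A.card = 0) ⊆ {∅} := by
      intro A hA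
      rw [Finset.mem_filter] at hA
      rw [Finset.mem_singleton]
      exact Finset.card_eq_zero.mp hA.2
    have := Finset.card_le_card hsub
    rw [Finset.card_singleton] at this
    omega
  have hnn : (n:ℕ) ∉ S := by
    intro hnS
    have hm := hmult n hnS
    have hsub : F.filter (fun A => A.card = n) ⊆ {Finset.univ} := by
      intro A hA
      rw [Finset.mem_filter] at hA
      have : A = Finset.univ := by
        apply Finset.eq_univ_of_card
        rw [hA.2]; simp
      rw [Finset.mem_singleton]
      exact this
    have := Finset.card_le_card hsub
    rw [Finset.card_singleton] at this
    omega
  have hS1 : S ⊆ Finset.Icc 1 (n-1) := by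
    intro t ht
    rw [Finset.mem_Icc]
    have h1 : t ≠ 0 := fun h => h0 (h ▸ ht)
    have h2 : t ≠ n := fun h => hnn (h ▸ ht)
    have := hle t ht
    omega
  have h1 : (1:ℕ) ∉ S := by
    intro h1S
    have hnotsub : ¬ S ⊆ Finset.Icc 1 (n - r) := by
      intro hsub
      have := Finset.card_le_card hsub
      rw [Nat.card_Icc] at this
      omega
    obtain ⟨t, htS, htn⟩ := Finset.not_subset.mp hnotsub
    have htIcc := Finset.mem_Icc.mp (hS1 htS)
    rw [Finset.mem_Icc] at htn
    have ht1 : n - r + 1 ≤ t := by omega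
    obtain ⟨A, hA, hAcard⟩ := hwit t htS
    have hsub2 : F.filter (fun B => B.card = 1) ⊆ Finset.powersetCard 1 Aᶜ := by
      intro B hB
      rw [Finset.mem_filter] at hB
      rw [Finset.mem_powersetCard]
      refine ⟨?_, hB.2⟩
      obtain ⟨x, hx⟩ := Finset.card_eq_one.mp hB.2
      have hne : B ≠ A := by
        intro h
        rw [h, hAcard] at hB
        omega
      have hns := hanti B hB.1 A hA hne
      rw [hx] at hns ⊢
      intro z hz
      rw [Finset.mem_singleton] at hz
      subst hz
      rw [Finset.mem_compl]
      intro hzA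
      exact hns (Finset.singleton_subset_iff.mpr hzA)
    have hc := Finset.card_le_card hsub2
    rw [Finset.card_powersetCard, Finset.card_compl, hAcard] at hc
    simp only [Fintype.card_fin, Nat.choose_one_right] at hc
    have := hmult 1 h1S
    omega
  have hn1' : (n-1:ℕ) ∉ S := by
    intro hS'
    have hnotsub : ¬ S ⊆ Finset.Icc r (n - 1) := by
      intro hsub
      have := Finset.card_le_card hsub
      rw [Nat.card_Icc] at this
      omega
    obtain ⟨t, htS, htn⟩ := Finset.not_subset.mp hnotsub
    have htIcc := Finset.mem_Icc.mp (hS1 htS)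
    rw [Finset.mem_Icc] at htn
    have ht1 : t ≤ r - 1 := by omega
    obtain ⟨A, hA, hAcard⟩ := hwit t htS
    have hsub2 : (F.filter (fun B => B.card = n-1)).image compl ⊆ Finset.powersetCard 1 A := by
      intro C hC
      obtain ⟨B, hB, hBC⟩ := Finset.mem_image.mp hC
      rw [Finset.mem_filter] at hB
      rw [Finset.mem_powersetCard]
      have hCcard : C.card = 1 := by
        rw [← hBC, Finset.card_compl, hB.2]
        simp only [Fintype.card_fin]
        omega
      refine ⟨?_, hCcard⟩
      have hne : A ≠ B := by
        intro h
        rw [h, hB.2] at hAcard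
        omega
      have hns := hanti A hA B hB.1 hne
      obtain ⟨z, hzA, hzB⟩ := Finset.not_subset.mp hns
      obtain ⟨y, hy⟩ := Finset.card_eq_one.mp hCcard
      have hzC : z ∈ C := by
        rw [← hBC, Finset.mem_compl]
        exact hzB
      rw [hy] at hzC ⊢
      rw [Finset.mem_singleton] at hzC
      subst hzC
      exact Finset.singleton_subset_iff.mpr hzA
    have hc := Finset.card_le_card hsub2
    rw [Finset.card_powersetCard, hAcard] at hc
    rw [Finset.card_image_of_injective _ compl_injective] at hc
    simp only [Nat.choose_one_right] at hc
    have := hmult (n-1) hS'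
    omega
  have hSeq : S = Finset.Icc 2 (n-2) := by
    apply Finset.eq_of_subset_of_card_le
    · intro t ht
      have := Finset.mem_Icc.mp (hS1 ht)
      have h1' : t ≠ 1 := fun h => h1 (h ▸ ht)
      have h2' : t ≠ n - 1 := fun h => hn1' (h ▸ ht)
      rw [Finset.mem_Icc]
      omega
    · rw [Nat.card_Icc]
      omega
  have hlev : ∀ t, 2 ≤ t → t ≤ n - 2 → r ≤ (F.filter fun A => A.card = t).card := by
    intro t ha hb
    exact hmult t (by rw [hSeq]; exact Finset.mem_Icc.mpr ⟨ha, hb⟩)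
  have hwit' : ∀ t, 2 ≤ t → t ≤ n - 2 → ∃ A ∈ F, A.card = t := by
    intro t ha hb
    have hrc := hlev t ha hb
    have hpos : 0 < (F.filter fun A => A.card = t).card := by omega
    obtain ⟨A, hA⟩ := Finset.card_pos.mp hpos
    rw [Finset.mem_filter] at hA
    exact ⟨A, hA.1, hA.2⟩
  -- star structure
  set G2 := F.filter (fun A => A.card = 2) with hG2def
  set Gn2 := F.filter (fun A => A.card = n-2) with hGn2def
  set H2 := Gn2.image compl with hH2def
  have hG2card : r ≤ G2.card := hlev 2 le_rfl (by omega)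
  have hGn2card : r ≤ Gn2.card := hlev (n-2) (by omega) le_rfl
  have hH2card : r ≤ H2.card := by
    rw [hH2def, Finset.card_image_of_injective _ compl_injective]
    exact hGn2card
  have hG2two : ∀ e ∈ G2, e.card = 2 := by
    intro e he; exact (Finset.mem_filter.mp he).2
  have hH2two : ∀ f ∈ H2, f.card = 2 := by
    intro f hf
    obtain ⟨B, hB, hBf⟩ := Finset.mem_image.mp hf
    rw [← hBf, Finset.card_compl, (Finset.mem_filter.mp hB).2]
    simp only [Fintype.card_fin]
    omega
  have crossGH : ∀ e ∈ G2, ∀ f ∈ H2, ¬ Disjoint e f := by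
    intro e he f hf hd
    obtain ⟨B, hB, hBf⟩ := Finset.mem_image.mp hf
    rw [Finset.mem_filter] at hB
    rw [Finset.mem_filter] at he
    have hne : e ≠ B := by
      intro h
      rw [h, hB.2] at he
      omega
    apply hanti e he.1 B hB.1 hne
    intro z hz
    by_contra hzB
    have hzf : z ∈ f := by rw [← hBf, Finset.mem_compl]; exact hzB
    exact Finset.disjoint_left.mp hd hz hzf
  obtain ⟨v, hvG, hvH⟩ := star_lemma G2 H2 (le_trans hr hG2card) (by omega) hG2two hH2two crossGH
  -- the sets X and Y
  set X := (G2.biUnion id).erase v with hXdef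
  set Y := (H2.biUnion id).erase v with hYdef
  have hXmem : ∀ x ∈ X, ({v, x} : Finset (Fin n)) ∈ F ∧ x ≠ v := by
    intro x hx
    rw [hXdef, Finset.mem_erase, Finset.mem_biUnion] at hx
    obtain ⟨hxv, e, he, hxe⟩ := hx
    obtain ⟨x', hx'v, heq⟩ := other_elt (hG2two e he) (hvG e he)
    have : x = x' := by
      rw [heq] at hxe
      simp only [id] at hxe
      simp only [Finset.mem_insert, Finset.mem_singleton] at hxe
      tauto
    subst this
    rw [← heq]
    exact ⟨(Finset.mem_filter.mp he).1, hxv⟩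
  have hYmem : ∀ y ∈ Y, ({v, y} : Finset (Fin n))ᶜ ∈ F ∧ ({v, y} : Finset (Fin n))ᶜ.card = n - 2 ∧ y ≠ v := by
    intro y hy
    rw [hYdef, Finset.mem_erase, Finset.mem_biUnion] at hy
    obtain ⟨hyv, f, hf, hyf⟩ := hy
    obtain ⟨y', hy'v, heq⟩ := other_elt (hH2two f hf) (hvH f hf)
    have : y = y' := by
      rw [heq] at hyf
      simp only [id] at hyf
      simp only [Finset.mem_insert, Finset.mem_singleton] at hyf
      tauto
    subst this
    obtain ⟨B, hB, hBf⟩ := Finset.mem_image.mp hf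
    rw [Finset.mem_filter] at hB
    have hBeq : B = ({v, y} : Finset (Fin n))ᶜ := by
      rw [← heq, ← hBf, compl_compl]
    rw [← hBeq]
    exact ⟨hB.1, hB.2, hyv⟩
  have hvX : v ∉ X := Finset.notMem_erase v _
  have hvY : v ∉ Y := Finset.notMem_erase v _
  have hXcard : r ≤ X.card := by
    have hsub : G2 ⊆ X.image (fun x => ({v, x} : Finset (Fin n))) := by
      intro e he
      obtain ⟨x, hxv, heq⟩ := other_elt (hG2two e he) (hvG e he)
      rw [Finset.mem_image]
      refine ⟨x, ?_, heq.symm⟩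
      rw [hXdef, Finset.mem_erase, Finset.mem_biUnion]
      exact ⟨hxv, e, he, by rw [heq]; simp⟩
    exact le_trans hG2card (le_trans (Finset.card_le_card hsub) (Finset.card_image_le))
  have hYcard : r ≤ Y.card := by
    have hsub : H2 ⊆ Y.image (fun y => ({v, y} : Finset (Fin n))) := by
      intro f hf
      obtain ⟨y, hyv, heq⟩ := other_elt (hH2two f hf) (hvH f hf)
      rw [Finset.mem_image]
      refine ⟨y, ?_, heq.symm⟩
      rw [hYdef, Finset.mem_erase, Finset.mem_biUnion]
      exact ⟨hyv, f, hf, by rw [heq]; simp⟩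
    exact le_trans hH2card (le_trans (Finset.card_le_card hsub) (Finset.card_image_le))
  -- dichotomy
  have typed : ∀ B ∈ F, 3 ≤ B.card → B.card ≤ n - 3 →
      (v ∈ B ∧ ∀ x ∈ X, x ∉ B) ∨ (v ∉ B ∧ Y ⊆ B) := by
    intro B hB h3 hn3
    by_cases hv : v ∈ B
    · left
      refine ⟨hv, ?_⟩
      intro x hx hxB
      obtain ⟨hQF, hxv⟩ := hXmem x hx
      have hQB : ({v, x} : Finset (Fin n)) ⊆ B := by
        intro z hz
        simp only [Finset.mem_insert, Finset.mem_singleton] at hz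
        rcases hz with rfl|rfl
        · exact hv
        · exact hxB
      have hne : ({v, x} : Finset (Fin n)) ≠ B := by
        intro h
        rw [← h, Finset.card_pair (Ne.symm hxv)] at h3
        omega
      exact hanti _ hQF B hB hne hQB
    · right
      refine ⟨hv, ?_⟩
      intro y hy
      obtain ⟨hAF, hAcard, hyv⟩ := hYmem y hy
      have hne : B ≠ ({v, y} : Finset (Fin n))ᶜ := by
        intro h
        rw [h, hAcard] at hn3
        omega
      have hns := hanti B hB _ hAF hne
      obtain ⟨z, hzB, hz⟩ := Finset.not_subset.mp hns
      rw [Finset.mem_compl, not_not] at hz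
      simp only [Finset.mem_insert, Finset.mem_singleton] at hz
      rcases hz with rfl|rfl
      · exact absurd hzB hv
      · exact hzB
  -- the set M
  set M := (insert v X)ᶜ with hMdef
  have hXn : X.card ≤ n := le_trans (Finset.card_le_univ X) (by simp)
  have hMcard : M.card = n - 1 - X.card := by
    rw [hMdef, Finset.card_compl, Finset.card_insert_of_notMem hvX]
    simp only [Fintype.card_fin]
    omega
  have hmle : M.card ≤ r + 1 := by omega
  -- type-1 members: erase v lands in powersetCard of M
  have t1sub : ∀ B ∈ F, 3 ≤ B.card → B.card ≤ n - 3 → v ∈ B →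
      B.erase v ⊆ M ∧ (B.erase v).card = B.card - 1 := by
    intro B hB h3 hn3 hv
    rcases typed B hB h3 hn3 with ⟨_, hX'⟩ | ⟨hv', _⟩
    · constructor
      · intro z hz
        obtain ⟨hzv, hzB⟩ := Finset.mem_erase.mp hz
        rw [hMdef, Finset.mem_compl, Finset.mem_insert]
        push_neg
        refine ⟨hzv, ?_⟩
        intro hzX
        exact hX' z hzX hzB
      · rw [Finset.card_erase_of_mem hv]
    · exact absurd hv hv'
  -- type-2 sets at level r are just Y
  have hFrnv : (F.filter (fun A => A.card = r)).filter (fun A => ¬ v ∈ A) ⊆ {Y} := by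
    intro B hB
    rw [Finset.mem_filter] at hB
    obtain ⟨hB', hvB⟩ := hB
    rw [Finset.mem_filter] at hB'
    obtain ⟨hBF, hBcard⟩ := hB'
    rcases typed B hBF (by omega) (by omega) with ⟨hv', _⟩ | ⟨_, hYB⟩
    · exact absurd hv' hvB
    · rw [Finset.mem_singleton]
      exact (Finset.eq_of_subset_of_card_le hYB (by rw [hBcard]; exact hYcard)).symm
  have hFrv : r - 1 ≤ ((F.filter (fun A => A.card = r)).filter (fun A => v ∈ A)).card := by
    have hsplit := Finset.card_filter_add_card_filter_not
      (s := F.filter (fun A => A.card = r)) (p := fun A => v ∈ A)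
    have h1' := Finset.card_le_card hFrnv
    rw [Finset.card_singleton] at h1'
    have h2' := hlev r (by omega) (by omega)
    omega
  have hFrvmem : ∀ B ∈ (F.filter (fun A => A.card = r)).filter (fun A => v ∈ A),
      B ∈ F ∧ B.card = r ∧ v ∈ B := by
    intro B hB
    rw [Finset.mem_filter] at hB
    obtain ⟨hB', hvB⟩ := hB
    rw [Finset.mem_filter] at hB'
    exact ⟨hB'.1, hB'.2, hvB⟩
  -- no type-2 at level r-1
  have hFr1v : ∀ B ∈ F, B.card = r - 1 → v ∈ B := by
    intro B hBF hBcard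
    rcases typed B hBF (by omega) (by omega) with ⟨hv', _⟩ | ⟨_, hYB⟩
    · exact hv'
    · have := Finset.card_le_card hYB
      omega
  -- case split on the size of M
  rcases Nat.lt_or_ge M.card r with hm1 | hm1
  · -- M.card ≤ r - 1 : level r-1 has too few sets
    have hsub : F.filter (fun A => A.card = r-1) ⊆ (M.powersetCard (r-2)).image (insert v) := by
      intro B hB
      rw [Finset.mem_filter] at hB
      obtain ⟨hBF, hBcard⟩ := hB
      have hv := hFr1v B hBF hBcard
      obtain ⟨hsubM, hcardM⟩ := t1sub B hBF (by omega) (by omega) hv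
      rw [Finset.mem_image]
      refine ⟨B.erase v, ?_, Finset.insert_erase hv⟩
      rw [Finset.mem_powersetCard]
      exact ⟨hsubM, by rw [hcardM, hBcard]; omega⟩
    have hc := le_trans (Finset.card_le_card hsub) Finset.card_image_le
    rw [Finset.card_powersetCard] at hc
    have hc2 : M.card.choose (r-2) ≤ (r-1).choose (r-2) := Nat.choose_le_choose _ (by omega)
    have hc3 : (r-1).choose (r-2) = r - 1 := by
      have h : r - 1 = (r-2) + 1 := by omega
      rw [h, Nat.choose_succ_self_right]
    have := hlev (r-1) (by omega) (by omega)
    omega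
  rcases Nat.lt_or_ge M.card (r+1) with hm2 | hm2
  · -- M.card = r
    have hmr : M.card = r := by omega
    obtain ⟨B1, hB1F, hB1card⟩ := hwit' (r-1) (by omega) (by omega)
    have hB1v := hFr1v B1 hB1F hB1card
    obtain ⟨hC0sub, hC0card'⟩ := t1sub B1 hB1F (by omega) (by omega) hB1v
    set C0 := B1.erase v with hC0def
    have hC0card : C0.card = r - 2 := by rw [hC0card', hB1card]; omega
    have hmaps : ∀ B ∈ (F.filter (fun A => A.card = r)).filter (fun A => v ∈ A),
        M \ (B.erase v) ∈ C0.image (fun w => ({w} : Finset (Fin n))) := by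
      intro B hB
      obtain ⟨hBF, hBcard, hvB⟩ := hFrvmem B hB
      obtain ⟨hDsub, hDcard⟩ := t1sub B hBF (by omega) (by omega) hvB
      have hMD : (M \ (B.erase v)).card = 1 := by
        rw [Finset.card_sdiff_of_subset hDsub, hDcard, hBcard, hmr]
        omega
      obtain ⟨w, hw⟩ := Finset.card_eq_one.mp hMD
      have hne : B1 ≠ B := by
        intro h
        rw [h, hBcard] at hB1card
        omega
      have hns := hanti B1 hB1F B hBF hne
      have hnsub : ¬ C0 ⊆ B.erase v := by
        intro hcs
        apply hns
        have := Finset.insert_subset_insert v hcs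
        rwa [Finset.insert_erase hB1v, Finset.insert_erase hvB] at this
      obtain ⟨z, hzC0, hzD⟩ := Finset.not_subset.mp hnsub
      have hzM : z ∈ M := hC0sub hzC0
      have hzMD : z ∈ M \ (B.erase v) := Finset.mem_sdiff.mpr ⟨hzM, hzD⟩
      rw [hw, Finset.mem_singleton] at hzMD
      rw [Finset.mem_image]
      exact ⟨z, hzC0, by rw [hzMD, ← hw]⟩
    have hinj : Set.InjOn (fun (B : Finset (Fin n)) => M \ (B.erase v))
        (↑((F.filter (fun A => A.card = r)).filter (fun A => v ∈ A)) : Set (Finset (Fin n))) := by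
      intro B hB B' hB' h
      simp only at h
      obtain ⟨hBF, hBcard, hvB⟩ := hFrvmem B (Finset.mem_coe.mp hB)
      obtain ⟨hBF', hBcard', hvB'⟩ := hFrvmem B' (Finset.mem_coe.mp hB')
      obtain ⟨hDsub, _⟩ := t1sub B hBF (by omega) (by omega) hvB
      obtain ⟨hDsub', _⟩ := t1sub B' hBF' (by omega) (by omega) hvB'
      have h2 := congrArg (fun s => M \ s) h
      rw [Finset.sdiff_sdiff_eq_self hDsub, Finset.sdiff_sdiff_eq_self hDsub'] at h2
      have := congrArg (insert v) h2
      rwa [Finset.insert_erase hvB, Finset.insert_erase hvB'] at this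
    have hle' := Finset.card_le_card_of_injOn _ hmaps hinj
    have := le_trans hle' Finset.card_image_le
    omega
  -- M.card = r + 1
  have hmr1 : M.card = r + 1 := by omega
  have hn22 : n = 2*r + 2 := by omega
  have hXr : X.card = r := by omega
  -- all level-3 sets contain v
  have hF3v : ∀ B ∈ F, B.card = 3 → v ∈ B := by
    intro B hBF hBcard
    rcases typed B hBF (by omega) (by omega) with ⟨hv', _⟩ | ⟨_, hYB⟩
    · exact hv'
    · have := Finset.card_le_card hYB
      omega
  -- level-3 parts
  set P3 := (F.filter (fun A => A.card = 3)).image (fun B => B.erase v) with hP3def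
  have hP3card : r ≤ P3.card := by
    rw [hP3def, Finset.card_image_of_injOn ?_]
    · exact hlev 3 (by omega) (by omega)
    · intro B hB B' hB' h
      rw [Finset.mem_coe, Finset.mem_filter] at hB hB'
      simp only at h
      have := congrArg (insert v) h
      rwa [Finset.insert_erase (hF3v B hB.1 hB.2), Finset.insert_erase (hF3v B' hB'.1 hB'.2)] at this
  have hP3mem : ∀ p ∈ P3, p ⊆ M ∧ p.card = 2 ∧ insert v p ∈ F ∧ (insert v p).card = 3 := by
    intro p hp
    rw [hP3def, Finset.mem_image] at hp
    obtain ⟨B, hB, hBp⟩ := hp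
    rw [Finset.mem_filter] at hB
    have hv := hF3v B hB.1 hB.2
    obtain ⟨hsubM, hcardM⟩ := t1sub B hB.1 (by omega) (by omega) hv
    rw [← hBp]
    rw [Finset.insert_erase hv]
    exact ⟨hsubM, by rw [hcardM, hB.2], hB.1, hB.2⟩
  -- level-r type-1 parts
  set Pr := ((F.filter (fun A => A.card = r)).filter (fun A => v ∈ A)).image
      (fun B => B.erase v) with hPrdef
  have hPrcard : r - 1 ≤ Pr.card := by
    rw [hPrdef, Finset.card_image_of_injOn ?_]
    · exact hFrv
    · intro B hB B' hB' h
      obtain ⟨_, _, hvB⟩ := hFrvmem B (Finset.mem_coe.mp hB)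
      obtain ⟨_, _, hvB'⟩ := hFrvmem B' (Finset.mem_coe.mp hB')
      simp only at h
      have := congrArg (insert v) h
      rwa [Finset.insert_erase hvB, Finset.insert_erase hvB'] at this
  have hPrmem : ∀ D ∈ Pr, D ⊆ M ∧ D.card = r - 1 ∧ insert v D ∈ F ∧ (insert v D).card = r := by
    intro D hD
    rw [hPrdef, Finset.mem_image] at hD
    obtain ⟨B, hB, hBD⟩ := hD
    obtain ⟨hBF, hBcard, hvB⟩ := hFrvmem B hB
    obtain ⟨hsubM, hcardM⟩ := t1sub B hBF (by omega) (by omega) hvB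
    rw [← hBD, Finset.insert_erase hvB]
    exact ⟨hsubM, by rw [hcardM, hBcard], hBF, hBcard⟩
  -- co-pairs of level-r parts
  set Hp := Pr.image (fun D => M \ D) with hHpdef
  have hHpcard : r - 1 ≤ Hp.card := by
    rw [hHpdef, Finset.card_image_of_injOn ?_]
    · exact hPrcard
    · intro D hD D' hD' h
      obtain ⟨hDsub, _, _, _⟩ := hPrmem D (Finset.mem_coe.mp hD)
      obtain ⟨hDsub', _, _, _⟩ := hPrmem D' (Finset.mem_coe.mp hD')
      simp only at h
      have h2 := congrArg (fun s => M \ s) h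
      rwa [Finset.sdiff_sdiff_eq_self hDsub, Finset.sdiff_sdiff_eq_self hDsub'] at h2
  have hHptwo : ∀ f ∈ Hp, f.card = 2 := by
    intro f hf
    rw [hHpdef, Finset.mem_image] at hf
    obtain ⟨D, hD, hDf⟩ := hf
    obtain ⟨hDsub, hDcard, _, _⟩ := hPrmem D hD
    rw [← hDf, Finset.card_sdiff_of_subset hDsub, hDcard, hmr1]
    omega
  have hP3two : ∀ p ∈ P3, p.card = 2 := fun p hp => (hP3mem p hp).2.1
  -- cross-intersecting inside M
  have crossM : ∀ p ∈ P3, ∀ f ∈ Hp, ¬ Disjoint p f := by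
    intro p hp f hf hd
    obtain ⟨hpsub, hpcard, hpF, hpcard3⟩ := hP3mem p hp
    rw [hHpdef, Finset.mem_image] at hf
    obtain ⟨D, hD, hDf⟩ := hf
    obtain ⟨hDsub, hDcard, hDF, hDcardr⟩ := hPrmem D hD
    have hne : insert v p ≠ insert v D := by
      intro h
      rw [h, hDcardr] at hpcard3
      omega
    have hns := hanti _ hpF _ hDF hne
    have hnsub : ¬ p ⊆ D := by
      intro hcs
      exact hns (Finset.insert_subset_insert v hcs)
    obtain ⟨z, hzp, hzD⟩ := Finset.not_subset.mp hnsub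
    have hzf : z ∈ f := by
      rw [← hDf, Finset.mem_sdiff]
      exact ⟨hpsub hzp, hzD⟩
    exact Finset.disjoint_left.mp hd hzp hzf
  obtain ⟨u, huP3, huHp⟩ := star_lemma P3 Hp (by omega) (by omega) hP3two hHptwo crossM
  have huM : u ∈ M := by
    obtain ⟨p, hp⟩ := Finset.card_pos.mp (show 0 < P3.card by omega)
    exact (hP3mem p hp).1 (huP3 p hp)
  have hMucard : (M.erase u).card = r := by
    rw [Finset.card_erase_of_mem huM, hmr1]
    omega
  -- every pair {u,x} with x in M \ {u} is a level-3 part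
  have hP3eq : ∀ x ∈ M.erase u, ({u, x} : Finset (Fin n)) ∈ P3 := by
    have hsub : P3 ⊆ (M.erase u).image (fun x => ({u, x} : Finset (Fin n))) := by
      intro p hp
      obtain ⟨hpsub, hpcard, _, _⟩ := hP3mem p hp
      obtain ⟨x, hxu, hpeq⟩ := other_elt hpcard (huP3 p hp)
      rw [Finset.mem_image]
      refine ⟨x, ?_, hpeq.symm⟩
      rw [Finset.mem_erase]
      exact ⟨hxu, hpsub (by rw [hpeq]; simp)⟩
    have heq := Finset.eq_of_subset_of_card_le hsub
      (le_trans Finset.card_image_le (by rw [hMucard]; exact hP3card))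
    intro x hx
    rw [heq, Finset.mem_image]
    exact ⟨x, hx, rfl⟩
  have hPru : ∀ D ∈ Pr, u ∉ D := by
    intro D hD huD
    have : u ∈ M \ D := huHp (M \ D) (by rw [hHpdef]; exact Finset.mem_image_of_mem _ hD)
    rw [Finset.mem_sdiff] at this
    exact this.2 huD
  -- the triple sets {v,u,x}
  have hB3 : ∀ x ∈ M.erase u, ({v, u, x} : Finset (Fin n)) ∈ F ∧
      ({v, u, x} : Finset (Fin n)).card = 3 := by
    intro x hx
    have h3 := hP3eq x hx
    obtain ⟨_, _, hF', hc'⟩ := hP3mem _ h3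
    exact ⟨hF', hc'⟩
  -- no level-(r+1) set contains v
  have hvr1 : ∀ B ∈ F, B.card = r + 1 → v ∉ B := by
    intro B hBF hBcard hvB
    obtain ⟨hDsub, hDcard⟩ := t1sub B hBF (by omega) (by omega) hvB
    by_cases huD : u ∈ B.erase v
    · have hpos : 0 < ((B.erase v).erase u).card := by
        rw [Finset.card_erase_of_mem huD, hDcard, hBcard]
        omega
      obtain ⟨x, hx⟩ := Finset.card_pos.mp hpos
      obtain ⟨hxu, hxD⟩ := Finset.mem_erase.mp hx
      have hxMu : x ∈ M.erase u := Finset.mem_erase.mpr ⟨hxu, hDsub hxD⟩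
      obtain ⟨hB3F, hB3card⟩ := hB3 x hxMu
      have hne : ({v, u, x} : Finset (Fin n)) ≠ B := by
        intro h
        rw [h, hBcard] at hB3card
        omega
      apply hanti _ hB3F B hBF hne
      intro z hz
      simp only [Finset.mem_insert, Finset.mem_singleton] at hz
      rcases hz with rfl|rfl|rfl
      · exact hvB
      · exact Finset.mem_of_mem_erase huD
      · exact Finset.mem_of_mem_erase hxD
    · have hDMu : B.erase v ⊆ M.erase u := by
        intro z hz
        rw [Finset.mem_erase]
        exact ⟨fun h => huD (h ▸ hz), hDsub hz⟩
      have hDeq : B.erase v = M.erase u := Finset.eq_of_subset_of_card_le hDMu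
        (by rw [hMucard, hDcard, hBcard]; omega)
      obtain ⟨D', hD'⟩ := Finset.card_pos.mp (show 0 < Pr.card by omega)
      obtain ⟨hD'sub, hD'card, hD'F, hD'cardr⟩ := hPrmem D' hD'
      have hD'B : insert v D' ⊆ B := by
        have hD'Mu : D' ⊆ M.erase u := by
          intro z hz
          rw [Finset.mem_erase]
          exact ⟨fun h => hPru D' hD' (h ▸ hz), hD'sub hz⟩
        rw [← hDeq] at hD'Mu
        have := Finset.insert_subset_insert v hD'Mu
        rwa [Finset.insert_erase hvB] at this
      have hne : insert v D' ≠ B := by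
        intro h
        rw [h, hBcard] at hD'cardr
        omega
      exact hanti _ hD'F B hBF hne hD'B
  -- level r+1 sets are type 2
  have hr1mem : ∀ B ∈ F.filter (fun A => A.card = r+1), Y ⊆ B ∧ v ∉ B := by
    intro B hB
    rw [Finset.mem_filter] at hB
    have hvB := hvr1 B hB.1 hB.2
    rcases typed B hB.1 (by omega) (by omega) with ⟨hv', _⟩ | ⟨_, hYB⟩
    · exact absurd hv' hvB
    · exact ⟨hYB, hvB⟩
  set Wf := (F.filter (fun A => A.card = r+1)).image (fun B => B \ Y) with hWfdef
  have hWfcard : r ≤ Wf.card := by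
    rw [hWfdef, Finset.card_image_of_injOn ?_]
    · exact hlev (r+1) (by omega) (by omega)
    · intro B hB B' hB' h
      obtain ⟨hYB, _⟩ := hr1mem B (Finset.mem_coe.mp hB)
      obtain ⟨hYB', _⟩ := hr1mem B' (Finset.mem_coe.mp hB')
      simp only at h
      have h2 := congrArg (fun s => Y ∪ s) h
      rwa [Finset.union_sdiff_of_subset hYB, Finset.union_sdiff_of_subset hYB'] at h2
  have hYr : Y.card = r := by
    by_contra hYne
    have hYge : r + 1 ≤ Y.card := by omega
    have hWsub : Wf ⊆ {∅} := by
      intro s hs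
      rw [hWfdef, Finset.mem_image] at hs
      obtain ⟨B, hB, hBs⟩ := hs
      obtain ⟨hYB, _⟩ := hr1mem B hB
      rw [Finset.mem_filter] at hB
      have : s.card = 0 := by
        rw [← hBs, Finset.card_sdiff_of_subset hYB, hB.2]
        omega
      rw [Finset.mem_singleton]
      exact Finset.card_eq_zero.mp this
    have := Finset.card_le_card hWsub
    rw [Finset.card_singleton] at this
    omega
  set N := (insert v Y)ᶜ with hNdef
  have hNcard : N.card = r + 1 := by
    rw [hNdef, Finset.card_compl, Finset.card_insert_of_notMem hvY, hYr]
    simp only [Fintype.card_fin]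
    omega
  have hWfN : ∀ s ∈ Wf, s.card = 1 ∧ s ⊆ N := by
    intro s hs
    rw [hWfdef, Finset.mem_image] at hs
    obtain ⟨B, hB, hBs⟩ := hs
    obtain ⟨hYB, hvB⟩ := hr1mem B hB
    rw [Finset.mem_filter] at hB
    constructor
    · rw [← hBs, Finset.card_sdiff_of_subset hYB, hB.2, hYr]
      omega
    · intro z hz
      rw [← hBs, Finset.mem_sdiff] at hz
      rw [hNdef, Finset.mem_compl, Finset.mem_insert]
      push_neg
      exact ⟨fun h => hvB (h ▸ hz.1), hz.2⟩
  set U := Wf.biUnion id with hUdef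
  have hUN : U ⊆ N := by
    intro z hz
    rw [hUdef, Finset.mem_biUnion] at hz
    obtain ⟨s, hs, hzs⟩ := hz
    exact (hWfN s hs).2 hzs
  have hUcard : r ≤ U.card := by
    rw [hUdef, Finset.card_biUnion ?_]
    · calc r ≤ Wf.card := hWfcard
        _ = ∑ s ∈ Wf, 1 := by rw [Finset.sum_const, smul_eq_mul, mul_one]
        _ ≤ ∑ s ∈ Wf, (id s).card := Finset.sum_le_sum (fun s hs => by
            simp only [id]
            rw [(hWfN s hs).1])
    · intro s hs t ht hst
      obtain ⟨a, ha⟩ := Finset.card_eq_one.mp (hWfN s hs).1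
      obtain ⟨b, hb⟩ := Finset.card_eq_one.mp (hWfN t ht).1
      simp only [Function.onFun, id, ha, hb]
      rw [Finset.disjoint_singleton]
      intro h
      exact hst (by rw [ha, hb, h])
  -- level r+2
  obtain ⟨B', hB'F, hB'card⟩ := hwit' (r+2) (by omega) (by omega)
  have hvB' : v ∉ B' := by
    intro hvB'
    obtain ⟨hDsub, hDcard⟩ := t1sub B' hB'F (by omega) (by omega) hvB'
    have hDeq : B'.erase v = M := Finset.eq_of_subset_of_card_le hDsub
      (by rw [hmr1, hDcard, hB'card]; omega)
    obtain ⟨x, hx⟩ := Finset.card_pos.mp (show 0 < (M.erase u).card by omega)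
    obtain ⟨hB3F, hB3card⟩ := hB3 x hx
    have hne : ({v, u, x} : Finset (Fin n)) ≠ B' := by
      intro h
      rw [h, hB'card] at hB3card
      omega
    have huB2 : u ∈ B' := by
      apply Finset.mem_of_mem_erase (s := B')
      rw [hDeq]
      exact huM
    have hxB2 : x ∈ B' := by
      apply Finset.mem_of_mem_erase (s := B')
      rw [hDeq]
      exact Finset.mem_of_mem_erase hx
    apply hanti _ hB3F B' hB'F hne
    intro z hz
    simp only [Finset.mem_insert, Finset.mem_singleton] at hz
    rcases hz with rfl|rfl|rfl
    · exact hvB'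
    · exact huB2
    · exact hxB2
  have hYB' : Y ⊆ B' := by
    rcases typed B' hB'F (by omega) (by omega) with ⟨hv', _⟩ | ⟨_, hYB⟩
    · exact absurd hv' hvB'
    · exact hYB
  set C := B' \ Y with hCdef
  have hCcard : C.card = 2 := by
    rw [hCdef, Finset.card_sdiff_of_subset hYB', hB'card, hYr]
    omega
  have hCN : C ⊆ N := by
    intro z hz
    rw [hCdef, Finset.mem_sdiff] at hz
    rw [hNdef, Finset.mem_compl, Finset.mem_insert]
    push_neg
    exact ⟨fun h => hvB' (h ▸ hz.1), hz.2⟩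
  have hCU : ∀ z ∈ C, z ∉ U := by
    intro z hzC hzU
    rw [hUdef, Finset.mem_biUnion] at hzU
    obtain ⟨s, hs, hzs⟩ := hzU
    have hs1 := (hWfN s hs).1
    obtain ⟨a, ha⟩ := Finset.card_eq_one.mp hs1
    have hza : z = a := by
      simp only [id] at hzs
      rw [ha, Finset.mem_singleton] at hzs
      exact hzs
    rw [hWfdef, Finset.mem_image] at hs
    obtain ⟨B, hB, hBs⟩ := hs
    obtain ⟨hYB, _⟩ := hr1mem B hB
    rw [Finset.mem_filter] at hB
    have hne : B ≠ B' := by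
      intro h
      rw [h, hB'card] at hB
      omega
    apply hanti B hB.1 B' hB'F hne
    have hBeq : B = Y ∪ s := by rw [← hBs, Finset.union_sdiff_of_subset hYB]
    rw [hBeq]
    apply Finset.union_subset hYB'
    rw [ha, ← hza, Finset.singleton_subset_iff]
    have hzBY : z ∈ B' \ Y := by rw [← hCdef]; exact hzC
    exact (Finset.mem_sdiff.mp hzBY).1
  have hCNU : C ⊆ N \ U := by
    intro z hz
    rw [Finset.mem_sdiff]
    exact ⟨hCN hz, hCU z hz⟩
  have hfin := Finset.card_le_card hCNU
  rw [hCcard, Finset.card_sdiff_of_subset hUN, hNcard] at hfin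
  omega
end

section
/- For every integer r ≥ 2 and every integer n with n ≥ 2r + 2·log₂ r + log₂ log₂ r + 15, one has g(n, r) = n − 3; that is, there exists an r-multiplicity antichain F ⊆ 2^[n] with |S(F)| = n − 3, and no r-multiplicity antichain achieves more. -/
/-!
Upper bound: with `r ≥ 2` there is no level `0` or `n`. Two singletons `{a}, {b}` push every
larger member into `{a, b}ᶜ`, so level `1` excludes the levels `n - 1` and `n - 2`; dually, by
complementation, level `n - 1` excludes the levels `1` and `2`. Hence the levels lie in an
interval of `n - 3` integers.

Lower bound: it suffices to find, for every `s ∈ [2, n/2]`, `r` sets of size `s` all containing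
one point `0` and together forming an antichain; adding their complements gives the levels
`[2, n - 2]`. The small levels are separated by private tags and shifted intervals. The levels
`s ≥ u + 2` come in runs of `Γ = ⌊C(2u, u) / r⌋` consecutive levels sharing the start of an
interval of length `s - u - 1`; inside a run the `Γ r` sets are told apart by distinct `u`-subsets
of a block of `2u` points. For `u = log r + ⌊log log r / 2⌋ + 4` one has `r² ≤ C(2u, u)`, hence
`Γ ≥ r`, and then everything fits into `n ≥ 2r + 2 log r + log log r + 15` points.
-/

open Finset

def IsMultiplicityAntichain {α : Type*} (r : ℕ) (F : Finset (Finset α)) : Prop :=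
  IsAntichain (· ⊆ ·) (F : Set (Finset α)) ∧ ∀ t ∈ F.image card, r ≤ #{A ∈ F | #A = t}

namespace IsMultiplicityAntichain

variable {α β : Type*} {r : ℕ} {F G : Finset (Finset α)}

theorem exists_ne_of_mem_image_card (hF : IsMultiplicityAntichain r F) (hr : 2 ≤ r) {t : ℕ}
    (ht : t ∈ F.image card) : ∃ A ∈ F, ∃ B ∈ F, A ≠ B ∧ #A = t ∧ #B = t := by
  obtain ⟨A, hA, B, hB, hAB⟩ := one_lt_card.1 (lt_of_lt_of_le hr (hF.2 t ht))
  rw [mem_filter] at hA hB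
  exact ⟨A, hA.1, B, hB.1, hAB, hA.2, hB.2⟩

theorem mem_Icc_of_mem_image_card [Fintype α] (hF : IsMultiplicityAntichain r F) (hr : 2 ≤ r)
    {t : ℕ} (ht : t ∈ F.image card) : t ∈ Icc 1 (Fintype.card α - 1) := by
  obtain ⟨A, -, B, -, hAB, hAt, hBt⟩ := hF.exists_ne_of_mem_image_card hr ht
  have htn : t ≤ Fintype.card α := hAt ▸ card_le_univ A
  have ht0 : t ≠ 0 := fun h => by
    rw [h, card_eq_zero] at hAt hBt
    exact hAB (hAt.trans hBt.symm)
  have htn' : t ≠ Fintype.card α := fun h => by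
    rw [h, card_eq_iff_eq_univ] at hAt hBt
    exact hAB (hAt.trans hBt.symm)
  rw [mem_Icc]
  omega

variable [DecidableEq α] [DecidableEq β]

theorem union (hF : IsMultiplicityAntichain r F) (hG : IsMultiplicityAntichain r G)
    (hFG : IsAntichain (· ⊆ ·) ((F ∪ G : Finset (Finset α)) : Set (Finset α))) :
    IsMultiplicityAntichain r (F ∪ G) := by
  refine ⟨hFG, fun t ht => ?_⟩
  rw [image_union, mem_union] at ht
  rcases ht with ht | ht
  · exact (hF.2 t ht).trans (card_le_card (filter_subset_filter _ subset_union_left))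
  · exact (hG.2 t ht).trans (card_le_card (filter_subset_filter _ subset_union_right))

theorem image (hF : IsMultiplicityAntichain r F) (φ : Finset α → Finset β)
    (hsub : ∀ A ∈ F, ∀ B ∈ F, φ A ⊆ φ B → A ⊆ B ∨ B ⊆ A)
    (hcard : ∀ A ∈ F, ∀ B ∈ F, #(φ A) = #(φ B) ↔ #A = #B) :
    IsMultiplicityAntichain r (F.image φ) := by
  have hinj : Set.InjOn φ F := fun A hA B hB hAB => by
    by_contra hne
    rcases hsub A hA B hB hAB.subset with h | h
    exacts [hF.1 hA hB hne h, hF.1 hB hA (Ne.symm hne) h]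
  refine ⟨?_, ?_⟩
  · rw [coe_image]
    rintro _ ⟨A, hA, rfl⟩ _ ⟨B, hB, rfl⟩ hne h
    have hAB : A ≠ B := fun h => hne (h ▸ rfl)
    rcases hsub A hA B hB h with h | h
    exacts [hF.1 hA hB hAB h, hF.1 hB hA hAB.symm h]
  · simp only [image_image, mem_image, Function.comp_apply]
    rintro t ⟨A, hA, rfl⟩
    calc r ≤ #{B ∈ F | #B = #A} := hF.2 _ (mem_image_of_mem _ hA)
      _ = #({B ∈ F | #B = #A}.image φ) :=
        (card_image_of_injOn (hinj.mono (filter_subset _ _))).symm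
      _ ≤ #{B ∈ F.image φ | #B = #(φ A)} := by
        refine card_le_card fun B' hB' => ?_
        obtain ⟨B, hB, rfl⟩ := mem_image.1 hB'
        rw [mem_filter] at hB ⊢
        exact ⟨mem_image_of_mem _ hB.1, (hcard B hB.1 A hA).2 hB.2⟩

theorem image_compl [Fintype α] (hF : IsMultiplicityAntichain r F) :
    IsMultiplicityAntichain r (F.image compl) :=
  hF.image compl (fun A _ B _ h => Or.inr (compl_subset_compl.1 h)) fun A _ B _ => by
    simp only [card_compl]
    have := card_le_univ A
    have := card_le_univ B
    omega

section Fintype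

variable [Fintype α]

theorem add_three_le_of_one_mem (hF : IsMultiplicityAntichain r F) (hr : 2 ≤ r)
    (h1 : 1 ∈ F.image card) {t : ℕ} (ht : t ∈ F.image card) (h2 : 2 ≤ t) :
    t + 3 ≤ Fintype.card α := by
  obtain ⟨A, hA, B, hB, hAB, hA1, hB1⟩ := hF.exists_ne_of_mem_image_card hr h1
  obtain ⟨a, rfl⟩ := card_eq_one.1 hA1
  obtain ⟨b, rfl⟩ := card_eq_one.1 hB1
  have hab : a ≠ b := fun h => hAB (h ▸ rfl)
  have avoid : ∀ C ∈ F, #C = t → C ⊆ {a, b}ᶜ := by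
    intro C hC hCt x hxC
    rw [mem_compl]
    intro hx
    have hnot : ∀ y, {y} ∈ F → y ∉ C := fun y hy hyC =>
      hF.1 hy hC (fun h => by rw [← h, card_singleton] at hCt; omega)
        (singleton_subset_iff.2 hyC)
    rcases mem_insert.1 hx with rfl | hx
    exacts [hnot x hA hxC, hnot b hB (mem_singleton.1 hx ▸ hxC)]
  have hpair : #({a, b}ᶜ : Finset α) = Fintype.card α - 2 := by
    rw [card_compl, card_pair hab]
  obtain ⟨C, hC, C', hC', hCC', hCt, hC't⟩ := hF.exists_ne_of_mem_image_card hr ht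
  have hle := card_le_card (avoid C hC hCt)
  have hne : t ≠ Fintype.card α - 2 := fun h => hCC' <|
    (eq_of_subset_of_card_le (avoid C hC hCt) (by omega)).trans
      (eq_of_subset_of_card_le (avoid C' hC' hC't) (by omega)).symm
  omega

theorem three_le_of_card_sub_one_mem (hF : IsMultiplicityAntichain r F) (hr : 2 ≤ r)
    (hn : Fintype.card α - 1 ∈ F.image card) {t : ℕ} (ht : t ∈ F.image card)
    (h2 : t + 2 ≤ Fintype.card α) : 3 ≤ t := by
  have hcompl : ∀ t ∈ F.image card, Fintype.card α - t ∈ (F.image compl).image card := by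
    intro t ht
    obtain ⟨A, hA, rfl⟩ := mem_image.1 ht
    exact mem_image.2 ⟨Aᶜ, mem_image_of_mem _ hA, card_compl A⟩
  have h1 := hcompl _ hn
  rw [show Fintype.card α - (Fintype.card α - 1) = 1 by omega] at h1
  have := hF.image_compl.add_three_le_of_one_mem hr h1 (hcompl t ht) (by omega)
  omega

theorem card_image_card_le (hF : IsMultiplicityAntichain r F) (hr : 2 ≤ r)
    (hn : 4 ≤ Fintype.card α) : #(F.image card) ≤ Fintype.card α - 3 := by
  set n := Fintype.card α
  have hrange := fun t ht => mem_Icc.1 (hF.mem_Icc_of_mem_image_card hr (t := t) ht)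
  have hsub : F.image card ⊆ Icc 1 (n - 3) ∨ F.image card ⊆ Icc 3 (n - 1) ∨
      F.image card ⊆ Icc 2 (n - 2) := by
    by_cases h1 : 1 ∈ F.image card
    · refine Or.inl fun t ht => mem_Icc.2 ?_
      have := hrange t ht
      have := fun h2 => hF.add_three_le_of_one_mem hr h1 ht h2
      omega
    by_cases hn1 : n - 1 ∈ F.image card
    · refine Or.inr (Or.inl fun t ht => mem_Icc.2 ?_)
      have := hrange t ht
      have := hF.three_le_of_card_sub_one_mem hr hn1 ht
      omega
    · refine Or.inr (Or.inr fun t ht => mem_Icc.2 ?_)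
      have := hrange t ht
      have : t ≠ 1 := fun h => h1 (h ▸ ht)
      have : t ≠ n - 1 := fun h => hn1 (h ▸ ht)
      omega
  rcases hsub with h | h | h <;>
    exact (card_le_card h).trans (by simp only [Nat.card_Icc]; omega)

theorem union_image_compl {L : Finset (Finset α)} (hL : IsMultiplicityAntichain r L) (x₀ : α)
    (hx₀ : ∀ A ∈ L, x₀ ∈ A) (hsizes : L.image card = Icc 2 (Fintype.card α / 2)) :
    IsMultiplicityAntichain r (L ∪ L.image compl) := by
  have hsmall : ∀ A ∈ L, #A ≤ Fintype.card α / 2 := fun A hA =>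
    (mem_Icc.1 (hsizes ▸ mem_image_of_mem card hA)).2
  refine hL.union hL.image_compl ?_
  rw [coe_union, isAntichain_union]
  refine ⟨hL.1, hL.image_compl.1, fun A hA _ hB' hne => ?_⟩
  obtain ⟨B, hB, rfl⟩ := mem_image.1 hB'
  refine ⟨fun h => (mem_compl.1 (h (hx₀ A hA))) (hx₀ B hB), fun h => hne ?_⟩
  refine (eq_of_subset_of_card_le h ?_).symm
  have := hsmall A hA
  have := hsmall B hB
  rw [card_compl]
  omega

theorem image_card_union_image_compl {L : Finset (Finset α)}
    (hsizes : L.image card = Icc 2 (Fintype.card α / 2)) :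
    (L ∪ L.image compl).image card = Icc 2 (Fintype.card α - 2) := by
  have hcompl : (L.image compl).image card = (L.image card).image (Fintype.card α - ·) := by
    simp only [image_image, Function.comp_def, card_compl]
  ext t
  rw [image_union, hcompl, hsizes, mem_union, mem_image, mem_Icc, mem_Icc]
  constructor
  · rintro (h | ⟨s, hs, rfl⟩)
    · omega
    · rw [mem_Icc] at hs
      omega
  · intro ht
    by_cases h : t ≤ Fintype.card α / 2
    · exact Or.inl ⟨ht.1, h⟩
    · exact Or.inr ⟨Fintype.card α - t, mem_Icc.2 (by omega), by omega⟩

end Fintype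

end IsMultiplicityAntichain

section LevelSets

variable (r u Γ : ℕ) (T : ℕ → ℕ → Finset ℕ)

/-- Layout of the ground set, with `v = r + 2u + 3`: `0` lies in every set; `1, …, r` tag the
sets of level `2`; `r + 1` marks level `3` and `r + 2` the levels `4, …, u + 1`; the block
`[r + 3, v)` carries the intervals `[r + s - 1, r + 2s - 4)` of the levels `4, …, u + 1` and the
labels `T p j`; the points `v + j` tag the sets of levels `3, …, u + 1`; the levels `s ≥ u + 2`
take an interval starting at `v + (s - u - 2) / Γ`. -/
def levelSet (s j : ℕ) : Finset ℕ :=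
  if s = 2 then {0, j + 1}
  else if s = 3 then {0, r + 1, r + 2 * u + 3 + j}
  else if s ≤ u + 1 then {0, r + 2, r + 2 * u + 3 + j} ∪ Ico (r + s - 1) (r + 2 * s - 4)
  else insert 0 (Ico (r + 2 * u + 3 + (s - u - 2) / Γ)
    (r + 2 * u + 3 + (s - u - 2) / Γ + (s - 1 - u)) ∪ T ((s - u - 2) % Γ) j)

structure IsBlockLabelling : Prop where
  subset_block : ∀ p j, T p j ⊆ Ico (r + 3) (r + 2 * u + 3)
  card_eq : ∀ p < Γ, ∀ j < r, #(T p j) = u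
  injective : ∀ p < Γ, ∀ j < r, ∀ p' < Γ, ∀ k < r, T p j = T p' k → p = p' ∧ j = k

variable {r u Γ T}

theorem exists_isBlockLabelling (h : Γ * r ≤ u.centralBinom) : ∃ T, IsBlockLabelling r u Γ T := by
  obtain ⟨e⟩ : Nonempty (Fin Γ × Fin r ↪ (Ico (r + 3) (r + 2 * u + 3)).powersetCard u) :=
    Function.Embedding.nonempty_of_card_le (by
      simpa [Nat.centralBinom, show r + 2 * u + 3 - (r + 3) = 2 * u by omega] using h)
  refine ⟨fun p j => if h : p < Γ ∧ j < r then e (⟨p, h.1⟩, ⟨j, h.2⟩) else ∅, ?_, ?_, ?_⟩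
  · intro p j
    split_ifs
    exacts [(mem_powersetCard.1 (e _).2).1, empty_subset _]
  · intro p hp j hj
    simp only [hp, hj, and_self, dite_true]
    exact (mem_powersetCard.1 (e _).2).2
  · intro p hp j hj p' hp' k hk h
    simp only [hp, hj, hp', hk, and_self, dite_true] at h
    have := e.injective (Subtype.ext h)
    simp only [Prod.mk.injEq, Fin.mk.injEq] at this
    exact this

theorem levelSet_two (j : ℕ) : levelSet r u Γ T 2 j = {0, j + 1} := by
  simp [levelSet]

theorem levelSet_three (j : ℕ) : levelSet r u Γ T 3 j = {0, r + 1, r + 2 * u + 3 + j} := by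
  simp [levelSet]

theorem levelSet_of_le {s : ℕ} (h4 : 4 ≤ s) (hs : s ≤ u + 1) (j : ℕ) :
    levelSet r u Γ T s j =
      {0, r + 2, r + 2 * u + 3 + j} ∪ Ico (r + s - 1) (r + 2 * s - 4) := by
  rw [levelSet, if_neg (by omega), if_neg (by omega), if_pos hs]

theorem levelSet_of_lt (hu : 2 ≤ u) {s : ℕ} (hs : u + 2 ≤ s) (j : ℕ) :
    levelSet r u Γ T s j = insert 0 (Ico (r + 2 * u + 3 + (s - u - 2) / Γ)
      (r + 2 * u + 3 + (s - u - 2) / Γ + (s - 1 - u)) ∪ T ((s - u - 2) % Γ) j) := by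
  rw [levelSet, if_neg (by omega), if_neg (by omega), if_neg (by omega)]

theorem zero_mem_levelSet (s j : ℕ) : 0 ∈ levelSet r u Γ T s j := by
  rw [levelSet]
  split_ifs <;> simp

theorem mem_levelSet_of_notMem_block (hT : IsBlockLabelling r u Γ T) (hu : 2 ≤ u) {s j x : ℕ}
    (hs : 2 ≤ s) (hx : x < r + 3 ∨ r + 2 * u + 3 ≤ x) :
    x ∈ levelSet r u Γ T s j ↔ x = 0 ∨ (s = 2 ∧ x = j + 1) ∨
      (s = 3 ∧ (x = r + 1 ∨ x = r + 2 * u + 3 + j)) ∨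
      (4 ≤ s ∧ s ≤ u + 1 ∧ (x = r + 2 ∨ x = r + 2 * u + 3 + j)) ∨
      (u + 2 ≤ s ∧ r + 2 * u + 3 + (s - u - 2) / Γ ≤ x ∧
        x < r + 2 * u + 3 + (s - u - 2) / Γ + (s - 1 - u)) := by
  rcases (show s = 2 ∨ s = 3 ∨ (4 ≤ s ∧ s ≤ u + 1) ∨ u + 2 ≤ s by omega)
    with rfl | rfl | ⟨h4, hsu⟩ | hsu
  · simp only [levelSet_two, mem_insert, mem_singleton, true_and]
    omega
  · simp only [levelSet_three, mem_insert, mem_singleton, true_and]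
    omega
  · simp only [levelSet_of_le h4 hsu, mem_union, mem_insert, mem_singleton, mem_Ico]
    omega
  · have hxT : x ∉ T ((s - u - 2) % Γ) j := fun h => by
      have := mem_Ico.1 (hT.subset_block _ _ h)
      omega
    simp only [levelSet_of_lt hu hsu, mem_insert, mem_union, mem_Ico, hxT, or_false]
    omega

theorem card_levelSet (hT : IsBlockLabelling r u Γ T) (hu : 2 ≤ u) (hΓ : 0 < Γ) {s j : ℕ}
    (hs : 2 ≤ s) (hj : j < r) : #(levelSet r u Γ T s j) = s := by
  rcases (show s = 2 ∨ s = 3 ∨ (4 ≤ s ∧ s ≤ u + 1) ∨ u + 2 ≤ s by omega)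
    with rfl | rfl | ⟨h4, hsu⟩ | hsu
  · rw [levelSet_two, card_pair (by omega)]
  · rw [levelSet_three, card_insert_of_notMem (by simp; omega), card_pair (by omega)]
  · rw [levelSet_of_le h4 hsu, card_union_of_disjoint, card_insert_of_notMem (by simp; omega),
      card_pair (by omega), Nat.card_Ico]
    · omega
    · rw [disjoint_left]
      simp only [mem_insert, mem_singleton, mem_Ico]
      omega
  · have hTQ := hT.subset_block ((s - u - 2) % Γ) j
    have hTcard := hT.card_eq _ (Nat.mod_lt (s - u - 2) hΓ) _ hj
    rw [levelSet_of_lt hu hsu]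
    generalize (s - u - 2) / Γ = q
    generalize T ((s - u - 2) % Γ) j = B at hTQ hTcard ⊢
    have hBQ : ∀ x ∈ B, r + 3 ≤ x ∧ x < r + 2 * u + 3 := fun x hx => mem_Ico.1 (hTQ hx)
    rw [card_insert_of_notMem, card_union_of_disjoint, Nat.card_Ico, hTcard]
    · omega
    · rw [disjoint_right]
      intro x hx
      have := hBQ x hx
      rw [mem_Ico]
      omega
    · simp only [mem_union, mem_Ico, not_or]
      exact ⟨by omega, fun h => by have := hBQ 0 h; omega⟩

/-- The interval start `v + (s - u - 2) / Γ` determines the run of levels, the label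
`T ((s - u - 2) % Γ) j` the position in the run and `j`. -/
theorem eq_of_levelSet_subset_of_add_two_le (hT : IsBlockLabelling r u Γ T) (hu : 2 ≤ u)
    (hΓ : 0 < Γ) {s t j k : ℕ} (hs : u + 2 ≤ s) (hst : s ≤ t) (hj : j < r) (hk : k < r)
    (h : levelSet r u Γ T s j ⊆ levelSet r u Γ T t k) : s = t ∧ j = k := by
  have ht : u + 2 ≤ t := hs.trans hst
  -- `omega` does not know that a quotient by a variable is nonnegative
  have hq₀ : 0 ≤ (s - u - 2) / Γ ∧ 0 ≤ (t - u - 2) / Γ := ⟨Nat.zero_le _, Nat.zero_le _⟩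
  have hq : (s - u - 2) / Γ = (t - u - 2) / Γ := by
    have hmem := h (show r + 2 * u + 3 + (s - u - 2) / Γ ∈ levelSet r u Γ T s j by
      rw [levelSet_of_lt hu hs, mem_insert, mem_union, mem_Ico]
      omega)
    rw [mem_levelSet_of_notMem_block hT hu (by omega) (by omega)] at hmem
    have := Nat.div_le_div_right (c := Γ) (show s - u - 2 ≤ t - u - 2 by omega)
    omega
  have hTsub : T ((s - u - 2) % Γ) j ⊆ T ((t - u - 2) % Γ) k := by
    intro y hy
    have hyQ := mem_Ico.1 (hT.subset_block _ _ hy)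
    have hyB := h (by rw [levelSet_of_lt hu hs]; exact mem_insert_of_mem (mem_union_right _ hy))
    rw [levelSet_of_lt hu ht, mem_insert, mem_union, mem_Ico] at hyB
    rcases hyB with hy0 | hyI | hyT
    · omega
    · omega
    · exact hyT
  have hp := hT.injective _ (Nat.mod_lt _ hΓ) _ hj _ (Nat.mod_lt _ hΓ) _ hk
    (eq_of_subset_of_card_le hTsub (by
      rw [hT.card_eq _ (Nat.mod_lt _ hΓ) _ hj, hT.card_eq _ (Nat.mod_lt _ hΓ) _ hk]))
  have he : s - u - 2 = t - u - 2 := by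
    rw [← Nat.div_add_mod (s - u - 2) Γ, hq, hp.1, Nat.div_add_mod]
  exact ⟨by omega, hp.2⟩

theorem eq_of_levelSet_subset (hT : IsBlockLabelling r u Γ T) (hu : 2 ≤ u) (hΓ : 0 < Γ)
    {s t j k : ℕ} (hs : 2 ≤ s) (ht : 2 ≤ t) (hj : j < r) (hk : k < r)
    (h : levelSet r u Γ T s j ⊆ levelSet r u Γ T t k) : s = t ∧ j = k := by
  have hst : s ≤ t := by
    simpa only [card_levelSet hT hu hΓ hs hj, card_levelSet hT hu hΓ ht hk] using card_le_card h
  have outside := fun x (hx : x < r + 3 ∨ r + 2 * u + 3 ≤ x) (hxA : x ∈ levelSet r u Γ T s j) =>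
    (mem_levelSet_of_notMem_block hT hu ht hx (j := k)).1 (h hxA)
  have hq₀ := Nat.zero_le ((t - u - 2) / Γ)
  rcases (show s = 2 ∨ s = 3 ∨ (4 ≤ s ∧ s ≤ u + 1) ∨ u + 2 ≤ s by omega)
    with rfl | rfl | ⟨h4, hsu⟩ | hsu
  · have := outside (j + 1) (by omega) (by simp [levelSet_two])
    omega
  · have h1 := outside (r + 1) (by omega) (by simp [levelSet_three])
    have h2 := outside (r + 2 * u + 3 + j) (by omega) (by simp [levelSet_three])
    omega
  · have h1 := outside (r + 2) (by omega) (by simp [levelSet_of_le h4 hsu])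
    have h2 := outside (r + 2 * u + 3 + j) (by omega) (by simp [levelSet_of_le h4 hsu])
    have ht4 : 4 ≤ t ∧ t ≤ u + 1 := by omega
    have h3 := h (show r + s - 1 ∈ levelSet r u Γ T s j by
      rw [levelSet_of_le h4 hsu, mem_union, mem_Ico]
      omega)
    rw [levelSet_of_le ht4.1 ht4.2] at h3
    simp only [mem_union, mem_insert, mem_singleton, mem_Ico] at h3
    omega
  · exact eq_of_levelSet_subset_of_add_two_le hT hu hΓ hsu hst hj hk h

theorem levelSet_subset_range (hT : IsBlockLabelling r u Γ T) (hu : 2 ≤ u) (hr : 2 ≤ r)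
    (hrΓ : r ≤ Γ) {n s j : ℕ} (hn : 2 * (r + u) + 7 ≤ n) (hs : 2 ≤ s) (hsn : s ≤ n / 2)
    (hj : j < r) : levelSet r u Γ T s j ⊆ range n := by
  have hfit : (s - u - 2) / Γ + r + u + 2 + s ≤ n := by
    have hqr : (s - u - 2) / Γ * r ≤ s - u - 2 :=
      (Nat.mul_le_mul_left _ hrΓ).trans (Nat.div_mul_le_self _ _)
    generalize (s - u - 2) / Γ = q at hqr ⊢
    rcases lt_or_ge q 2 with hq | hq
    · interval_cases q <;> omega
    · have : 2 * q + 2 * r ≤ q * r + 4 := by nlinarith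
      omega
  intro x hx
  rw [mem_range]
  by_cases hQ : r + 3 ≤ x ∧ x < r + 2 * u + 3
  · omega
  · rw [mem_levelSet_of_notMem_block hT hu hs (by omega)] at hx
    have := Nat.zero_le ((s - u - 2) / Γ)
    omega

end LevelSets

section LowerFamily

variable (r u Γ : ℕ) (T : ℕ → ℕ → Finset ℕ)

def lowerFamily (n : ℕ) : Finset (Finset ℕ) :=
  (Icc 2 (n / 2) ×ˢ range r).image fun sj => levelSet r u Γ T sj.1 sj.2

variable {r u Γ T} {n : ℕ}

theorem mem_lowerFamily {A : Finset ℕ} :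
    A ∈ lowerFamily r u Γ T n ↔ ∃ s j, (2 ≤ s ∧ s ≤ n / 2) ∧ j < r ∧ levelSet r u Γ T s j = A := by
  simp [lowerFamily, and_assoc]

theorem isMultiplicityAntichain_lowerFamily (hT : IsBlockLabelling r u Γ T) (hu : 2 ≤ u)
    (hΓ : 0 < Γ) : IsMultiplicityAntichain r (lowerFamily r u Γ T n) := by
  refine ⟨fun A hA B hB hAB hsub => ?_, fun t ht => ?_⟩
  · obtain ⟨s, j, hs, hj, rfl⟩ := mem_lowerFamily.1 hA
    obtain ⟨t, k, ht, hk, rfl⟩ := mem_lowerFamily.1 hB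
    obtain ⟨rfl, rfl⟩ := eq_of_levelSet_subset hT hu hΓ hs.1 ht.1 hj hk hsub
    exact hAB rfl
  · obtain ⟨_, hA, rfl⟩ := mem_image.1 ht
    obtain ⟨s, j, hs, hj, rfl⟩ := mem_lowerFamily.1 hA
    have hinj : Set.InjOn (levelSet r u Γ T s) (range r) := fun j hj k hk hjk =>
      (eq_of_levelSet_subset hT hu hΓ hs.1 hs.1 (mem_range.1 hj) (mem_range.1 hk) hjk.subset).2
    calc r = #((range r).image (levelSet r u Γ T s)) := by
          rw [card_image_of_injOn hinj, card_range]
      _ ≤ _ := card_le_card fun B hB => by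
        obtain ⟨k, hk, rfl⟩ := mem_image.1 hB
        rw [mem_range] at hk
        rw [mem_filter, card_levelSet hT hu hΓ hs.1 hk, card_levelSet hT hu hΓ hs.1 hj]
        exact ⟨mem_lowerFamily.2 ⟨s, k, hs, hk, rfl⟩, rfl⟩

theorem image_card_lowerFamily (hT : IsBlockLabelling r u Γ T) (hu : 2 ≤ u) (hΓ : 0 < Γ)
    (hr : 0 < r) : (lowerFamily r u Γ T n).image card = Icc 2 (n / 2) := by
  ext t
  simp only [mem_image, mem_lowerFamily, mem_Icc]
  constructor
  · rintro ⟨_, ⟨s, j, hs, hj, rfl⟩, rfl⟩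
    rwa [card_levelSet hT hu hΓ hs.1 hj]
  · exact fun ht => ⟨_, ⟨t, 0, ht, hr, rfl⟩, card_levelSet hT hu hΓ ht.1 hr⟩

end LowerFamily

section RestrictToFin

variable {n : ℕ}

theorem card_preimage_val {A : Finset ℕ} (hA : A ⊆ range n) :
    #(A.preimage (Fin.val : Fin n → ℕ) Fin.val_injective.injOn) = #A := by
  classical
  rw [card_preimage, filter_true_of_mem fun x hx => ⟨⟨x, mem_range.1 (hA hx)⟩, rfl⟩]

theorem preimage_val_subset_iff {A B : Finset ℕ} (hA : A ⊆ range n) :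
    A.preimage (Fin.val : Fin n → ℕ) Fin.val_injective.injOn ⊆
      B.preimage Fin.val Fin.val_injective.injOn ↔ A ⊆ B := by
  refine ⟨fun h x hx => ?_, fun h => monotone_preimage Fin.val_injective h⟩
  simpa [mem_preimage, hx] using @h ⟨x, mem_range.1 (hA hx)⟩

end RestrictToFin

theorem exists_isMultiplicityAntichain {r u n : ℕ} (hr : 2 ≤ r) (hu : 2 ≤ u)
    (hru : r * r ≤ u.centralBinom) (hn : 2 * (r + u) + 7 ≤ n) :
    ∃ F : Finset (Finset (Fin n)), IsMultiplicityAntichain r F ∧ F.image card = Icc 2 (n - 2) := by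
  set Γ := u.centralBinom / r
  have hrΓ : r ≤ Γ := (Nat.le_div_iff_mul_le (by omega)).2 hru
  obtain ⟨T, hT⟩ := exists_isBlockLabelling (Nat.div_mul_le_self u.centralBinom r)
  have hGn : ∀ A ∈ lowerFamily r u Γ T n, A ⊆ range n := by
    intro A hA
    obtain ⟨s, j, hs, hj, rfl⟩ := mem_lowerFamily.1 hA
    exact levelSet_subset_range hT hu hr hrΓ hn hs.1 hs.2 hj
  set L := (lowerFamily r u Γ T n).image
    fun A => A.preimage (Fin.val : Fin n → ℕ) Fin.val_injective.injOn
  have hL : IsMultiplicityAntichain r L :=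
    (isMultiplicityAntichain_lowerFamily hT hu (by omega)).image _
      (fun A hA _ _ h => Or.inl ((preimage_val_subset_iff (hGn A hA)).1 h))
      (fun A hA B hB => by rw [card_preimage_val (hGn A hA), card_preimage_val (hGn B hB)])
  have hsizes : L.image card = Icc 2 (Fintype.card (Fin n) / 2) := by
    rw [Fintype.card_fin, ← image_card_lowerFamily hT hu (by omega) (by omega), image_image]
    exact image_congr fun A hA => card_preimage_val (hGn A hA)
  have hx₀ : ∀ A ∈ L, (⟨0, by omega⟩ : Fin n) ∈ A := by
    intro A hA
    obtain ⟨B, hB, rfl⟩ := mem_image.1 hA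
    obtain ⟨s, j, -, -, rfl⟩ := mem_lowerFamily.1 hB
    simpa [mem_preimage] using zero_mem_levelSet s j
  refine ⟨L ∪ L.image compl, hL.union_image_compl _ hx₀ hsizes, ?_⟩
  rw [IsMultiplicityAntichain.image_card_union_image_compl hsizes, Fintype.card_fin]

theorem mul_self_le_centralBinom_natLog (r : ℕ) :
    r * r ≤ (Nat.log 2 r + Nat.log 2 (Nat.log 2 r) / 2 + 4).centralBinom := by
  set a := Nat.log 2 r
  set c := Nat.log 2 a / 2
  have hr : r * r ≤ 4 ^ (a + 1) := by
    have := (Nat.lt_pow_succ_log_self one_lt_two r).le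
    calc r * r ≤ 2 ^ (a + 1) * 2 ^ (a + 1) := Nat.mul_le_mul this this
      _ = 4 ^ (a + 1) := by rw [← mul_pow]; norm_num
  have ha : a + 1 ≤ 4 ^ (c + 1) := by
    calc a + 1 ≤ 2 ^ (Nat.log 2 a + 1) := Nat.lt_pow_succ_log_self one_lt_two a
      _ ≤ 2 ^ (2 * (c + 1)) := Nat.pow_le_pow_right two_pos (by omega)
      _ = 4 ^ (c + 1) := by rw [pow_mul]; norm_num
  have hc : c < 4 ^ c := Nat.lt_pow_self (by norm_num)
  have hu : a + c + 4 ≤ 4 ^ (c + 3) := by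
    have : 4 ^ (c + 3) = 16 * 4 ^ (c + 1) := by ring
    have : 4 ^ (c + 1) = 4 * 4 ^ c := by ring
    omega
  have key : (a + c + 4) * (r * r) < (a + c + 4) * (a + c + 4).centralBinom :=
    calc (a + c + 4) * (r * r) ≤ 4 ^ (c + 3) * 4 ^ (a + 1) := Nat.mul_le_mul hu hr
      _ = 4 ^ (a + c + 4) := by rw [← pow_add]; ring_nf
      _ < _ := Nat.four_pow_lt_mul_centralBinom _ (by omega)
  exact (Nat.lt_of_mul_lt_mul_left key).le

theorem add_natLog_le_of_add_logb_le {r n : ℕ} (hr : 2 ≤ r)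
    (hn : (n : ℝ) ≥ 2 * r + 2 * Real.logb 2 r + Real.logb 2 (Real.logb 2 r) + 15) :
    2 * r + 2 * Nat.log 2 r + Nat.log 2 (Nat.log 2 r) + 15 ≤ n := by
  have ha : (Nat.log 2 r : ℝ) ≤ Real.logb 2 r := by simpa using Real.natLog_le_logb r 2
  have ha₁ : (1 : ℝ) ≤ Nat.log 2 r := by
    exact_mod_cast Nat.le_log_of_pow_le one_lt_two (by simpa using hr)
  have hb : (Nat.log 2 (Nat.log 2 r) : ℝ) ≤ Real.logb 2 (Real.logb 2 r) :=
    (by simpa using Real.natLog_le_logb (Nat.log 2 r) 2 : _ ≤ Real.logb 2 (Nat.log 2 r)).trans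
      (Real.logb_le_logb_of_le one_lt_two (by linarith) ha)
  exact_mod_cast (show ((2 * r + 2 * Nat.log 2 r + Nat.log 2 (Nat.log 2 r) + 15 : ℕ) : ℝ) ≤ n by
    push_cast
    linarith)

theorem stmt_12 (r n : ℕ) (hr : 2 ≤ r)
    (hn : (n : ℝ) ≥ 2 * r + 2 * Real.logb 2 r + Real.logb 2 (Real.logb 2 r) + 15) :
    (∃ F : Finset (Finset (Fin n)),
      (∀ A ∈ F, ∀ B ∈ F, A ≠ B → ¬ A ⊆ B) ∧
      (∀ t ∈ F.image Finset.card,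
        r ≤ (F.filter (fun A => A.card = t)).card) ∧
      (F.image Finset.card).card = n - 3) ∧
    (∀ F : Finset (Finset (Fin n)),
      (∀ A ∈ F, ∀ B ∈ F, A ≠ B → ¬ A ⊆ B) →
      (∀ t ∈ F.image Finset.card,
        r ≤ (F.filter (fun A => A.card = t)).card) →
      (F.image Finset.card).card ≤ n - 3) := by
  have hn' := add_natLog_le_of_add_logb_le hr hn
  obtain ⟨F, hF, hsizes⟩ := exists_isMultiplicityAntichain (n := n) hr (by omega)
    (mul_self_le_centralBinom_natLog r) (by omega)
  refine ⟨⟨F, fun A hA B hB => hF.1 hA hB, hF.2, by rw [hsizes, Nat.card_Icc]; omega⟩,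
    fun F hanti hmult => ?_⟩
  simpa using IsMultiplicityAntichain.card_image_card_le ⟨fun A hA B hB => hanti A hA B hB, hmult⟩
    hr (by simp only [Fintype.card_fin]; omega)
end

section
/- For every integer r ≥ 2 and every integer n with n ≥ 2r + 2·log₂ r + log₂ log₂ r + 15, there exists an antichain F ⊆ 2^[n] such that for every t ∈ {2, 3, ..., n−2}, F contains at least r sets of size t. -/
open Finset

lemma sixteen_pow_le (a : ℕ) (ha : 1 ≤ a) : 16 ^ a ≤ 4 * a * (Nat.centralBinom a) ^ 2 := by
  induction a with
  | zero => omega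
  | succ n ih =>
    rcases Nat.eq_or_lt_of_le ha with h1 | h1
    · have : Nat.centralBinom 1 = 2 := by decide
      simp [← h1, this]
    · have hn : 1 ≤ n := by omega
      have IH := ih hn
      have hrec : (n + 1) * Nat.centralBinom (n + 1) = 2 * (2 * n + 1) * Nat.centralBinom n :=
        Nat.succ_mul_centralBinom_succ n
      have key : (n + 1) * (16 ^ (n+1)) ≤ (n + 1) * (4 * (n+1) * (Nat.centralBinom (n+1))^2) := by
        have h2 : (n+1) * (4 * (n+1) * (Nat.centralBinom (n+1))^2) =
            4 * ((n+1) * Nat.centralBinom (n+1))^2 := by ring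
        rw [h2, hrec]
        have h3 : 4 * (2 * (2*n+1) * Nat.centralBinom n)^2
            = (16 * (2*n+1)^2) * (Nat.centralBinom n)^2 := by ring
        rw [h3]
        calc (n+1) * 16^(n+1) = 16 * (n+1) * 16^n := by ring
          _ ≤ 16 * (n+1) * (4 * n * (Nat.centralBinom n)^2) := by
              exact Nat.mul_le_mul_left _ IH
          _ = (64 * n * (n+1)) * (Nat.centralBinom n)^2 := by ring
          _ ≤ (16 * (2*n+1)^2) * (Nat.centralBinom n)^2 := by
              have : 64 * n * (n+1) ≤ 16 * (2*n+1)^2 := by nlinarith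
              exact Nat.mul_le_mul_right _ this
      exact Nat.le_of_mul_le_mul_left key (by omega)

def skbot (p : ℕ) : Finset ℕ := ((range (p-1)).image (fun i => 2*i+1)) ∪ {2*p-4}

def sktop (q p : ℕ) : Finset ℕ :=
  (range q) \ (((range (q-p-1)).image (fun i => 2*i)) ∪ {2*(q-p)-1})

def skel (q p : ℕ) : Finset ℕ := if 2*p ≤ q + 2 then skbot p else sktop q p

lemma mem_skbot {p x : ℕ} (hp : 2 ≤ p) :
    x ∈ skbot p ↔ ((∃ i, i < p - 1 ∧ x = 2*i+1) ∨ x = 2*p-4) := by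
  simp [skbot, eq_comm]
  exact or_comm

lemma mem_sktop {q p x : ℕ} :
    x ∈ sktop q p ↔ (x < q ∧ ¬((∃ i, i < q-p-1 ∧ x = 2*i) ∨ x = 2*(q-p)-1)) := by
  simp [sktop, eq_comm]
  tauto

lemma skel_subset {q p : ℕ} (hq : 3 ≤ q) (h2 : 2 ≤ p) (hp : p + 1 ≤ q) :
    skel q p ⊆ range q := by
  unfold skel
  split_ifs with h
  · intro x hx
    rw [mem_skbot h2] at hx
    rw [mem_range]
    rcases hx with ⟨i, hi, rfl⟩ | rfl <;> omega
  · intro x hx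
    rw [mem_sktop] at hx
    rw [mem_range]; exact hx.1

lemma skel_card {q p : ℕ} (hq : 3 ≤ q) (h2 : 2 ≤ p) (hp : p + 1 ≤ q) :
    (skel q p).card = p := by
  unfold skel
  split_ifs with h
  · rw [skbot, card_union_of_disjoint, card_image_of_injective, card_range, card_singleton]
    · omega
    · intro x y hxy; dsimp only at hxy; omega
    · simp only [disjoint_singleton_right, mem_image, mem_range, not_exists]
      intro i hi; omega
  · rw [sktop, card_sdiff_of_subset]
    · rw [card_union_of_disjoint, card_image_of_injective, card_range, card_singleton, card_range]
      · omega
      · intro x y hxy; dsimp only at hxy; omega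
      · simp only [disjoint_singleton_right, mem_image, mem_range, not_exists]
        intro i hi; omega
    · intro x hx
      simp only [mem_union, mem_image, mem_range, mem_singleton] at hx
      rw [mem_range]
      rcases hx with ⟨i, hi, rfl⟩ | rfl <;> omega

lemma skel_not_subset {q p p' : ℕ} (hq : 3 ≤ q) (h2 : 2 ≤ p) (hpp : p < p') (hp' : p' + 1 ≤ q) :
    ¬ skel q p ⊆ skel q p' := by
  intro hsub
  unfold skel at hsub
  split_ifs at hsub with h h' h'
  · -- bot ⊆ bot
    have hx : (2*p-4) ∈ skbot p := by rw [mem_skbot h2]; right; rfl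
    have := hsub hx
    rw [mem_skbot (by omega)] at this
    rcases this with ⟨i, hi, hix⟩ | hix <;> omega
  · -- bot ⊆ top
    by_cases hcase : p ≤ q - p'
    · have hx : (2*p-4) ∈ skbot p := by rw [mem_skbot h2]; right; rfl
      have := hsub hx
      rw [mem_sktop] at this
      exact this.2 (Or.inl ⟨p-2, by omega, by omega⟩)
    · have hx : (2*(q-p')-1) ∈ skbot p := by
        rw [mem_skbot h2]; left; exact ⟨(q-p')-1, by omega, by omega⟩
      have := hsub hx
      rw [mem_sktop] at this
      exact this.2 (Or.inr rfl)
  · -- top ⊆ bot : impossible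
    omega
  · -- top ⊆ top
    have hx : (2*(q-p')-1) ∈ sktop q p := by
      rw [mem_sktop]
      constructor
      · omega
      · rintro (⟨i, hi, hix⟩ | hix) <;> omega
    have := hsub hx
    rw [mem_sktop] at this
    exact this.2 (Or.inr rfl)

/-! ## P_bot construction -/

def smallSet (w w' t u : ℕ) : Finset ℕ := {t-2} ∪ Ico (w+w') (w+w'+(t-2)) ∪ {u}

def smallF (m w w' t : ℕ) : Finset (Finset ℕ) :=
  (Ico (w+w'+w-1) m).image (smallSet w w' t)

def DshF (q w w' p : ℕ) : Finset ℕ := (skel q p).image (· + (w+w'))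

def bigF (q w w' t : ℕ) : Finset (Finset ℕ) :=
  ((Ico w (w+w')).powersetCard w).image (fun G => DshF q w w' (t-w) ∪ G)

lemma mem_smallSet {w w' t u x : ℕ} :
    x ∈ smallSet w w' t u ↔ (x = t-2 ∨ (w+w' ≤ x ∧ x < w+w'+(t-2)) ∨ x = u) := by
  simp [smallSet, or_assoc]
  tauto

lemma smallSet_card {w w' t u : ℕ} (h2 : 2 ≤ t) (htw : t ≤ w + 1) (hw' : 1 ≤ w')
    (hu : w+w'+w-1 ≤ u) : (smallSet w w' t u).card = t := by
  rw [smallSet, union_assoc, card_union_of_disjoint, card_union_of_disjoint, card_singleton,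
    Nat.card_Ico, card_singleton]
  · omega
  · rw [disjoint_left]
    intro x hx hx2
    rw [mem_Ico] at hx
    rw [mem_singleton] at hx2
    omega
  · rw [disjoint_left]
    intro x hx hx2
    rw [mem_singleton] at hx
    rw [mem_union, mem_Ico, mem_singleton] at hx2
    omega

lemma mem_DshF {q w w' p x : ℕ} :
    x ∈ DshF q w w' p ↔ ∃ y ∈ skel q p, y + (w+w') = x := by
  simp [DshF]

lemma DshF_card {q w w' p : ℕ} (hq : 3 ≤ q) (h2 : 2 ≤ p) (hp : p + 1 ≤ q) :
    (DshF q w w' p).card = p := by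
  rw [DshF, card_image_of_injective _ (add_left_injective _), skel_card hq h2 hp]

lemma DshF_lb {q w w' p x : ℕ} (hx : x ∈ DshF q w w' p) : w + w' ≤ x := by
  rw [mem_DshF] at hx; obtain ⟨y, _, rfl⟩ := hx; omega

lemma DshF_ub {q w w' p x : ℕ} (hq : 3 ≤ q) (h2 : 2 ≤ p) (hp : p + 1 ≤ q)
    (hx : x ∈ DshF q w w' p) : x < w + w' + q := by
  rw [mem_DshF] at hx
  obtain ⟨y, hy, rfl⟩ := hx
  have := skel_subset hq h2 hp hy
  rw [mem_range] at this
  omega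

lemma DshF_subset_iff {q w w' p p' : ℕ} :
    DshF q w w' p ⊆ DshF q w w' p' ↔ skel q p ⊆ skel q p' := by
  rw [DshF, DshF]
  exact image_subset_image_iff (add_left_injective _)

lemma pbot (m K r w' : ℕ) (hr : 2 ≤ r) (hw4 : 4 ≤ w')
    (hC : r ≤ w'.choose (w'/2))
    (hK : w'/2 + 2 ≤ K)
    (hskel : K + w' + 1 ≤ m)
    (hu : r + 2*(w'/2) + w' ≤ m + 1) :
    ∃ S : Finset (Finset ℕ),
      (∀ A ∈ S, A ⊆ range m ∧ 2 ≤ A.card ∧ A.card ≤ K) ∧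
      (∀ A ∈ S, ∀ B ∈ S, A ≠ B → ¬ A ⊆ B) ∧
      (∀ p ∈ Icc 2 K, r ≤ (S.filter (fun A => A.card = p)).card) := by
  obtain ⟨w, hwdef⟩ : ∃ x, x = w'/2 := ⟨_, rfl⟩
  rw [← hwdef] at hC hK hu
  obtain ⟨q, hqdef⟩ : ∃ x, x = m - w - w' := ⟨_, rfl⟩
  have hw2 : 2 ≤ w := by omega
  have hww' : 2*w ≤ w' := by omega
  have hq3 : 3 ≤ q := by omega
  have hqm : w + w' + q = m := by omega
  clear hwdef hqdef
  set fam : ℕ → Finset (Finset ℕ) :=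
    fun t => if t ≤ w + 1 then smallF m w w' t else bigF q w w' t with hfam
  have hmemfam : ∀ t A, A ∈ fam t ↔
      (if t ≤ w + 1 then A ∈ smallF m w w' t else A ∈ bigF q w w' t) := by
    intro t A
    rw [hfam]
    dsimp only
    split_ifs <;> rfl
  -- properties of members of each level
  have hprops : ∀ t ∈ Icc 2 K, ∀ A ∈ fam t, A ⊆ range m ∧ A.card = t := by
    intro t ht A hA
    rw [mem_Icc] at ht
    rw [hmemfam] at hA
    split_ifs at hA with hcase
    · obtain ⟨u, hu', rfl⟩ := mem_image.mp hA
      rw [mem_Ico] at hu'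
      constructor
      · intro x hx
        rw [mem_smallSet] at hx
        rw [mem_range]
        rcases hx with rfl | ⟨_, _⟩ | rfl <;> omega
      · exact smallSet_card ht.1 hcase (by omega) hu'.1
    · obtain ⟨G, hG, rfl⟩ := mem_image.mp hA
      rw [mem_powersetCard] at hG
      obtain ⟨hGsub, hGcard⟩ := hG
      have hG' : ∀ x ∈ G, w ≤ x ∧ x < w + w' := by
        intro x hx; have := hGsub hx; rw [mem_Ico] at this; exact this
      have htw : w + 2 ≤ t := by omega
      have hp2 : 2 ≤ t - w := by omega
      have hpq : (t - w) + 1 ≤ q := by omega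
      constructor
      · intro x hx
        rw [mem_union] at hx
        rw [mem_range]
        rcases hx with hx | hx
        · have := DshF_ub hq3 hp2 hpq hx; omega
        · have := (hG' x hx).2; omega
      · rw [card_union_of_disjoint, DshF_card hq3 hp2 hpq, hGcard]
        · omega
        · rw [disjoint_left]
          intro x hx hx2
          have := DshF_lb hx
          have := (hG' x hx2).2
          omega
  refine ⟨(Icc 2 K).biUnion fam, ?_, ?_, ?_⟩
  · intro A hA
    obtain ⟨t, ht, hAt⟩ := mem_biUnion.mp hA
    obtain ⟨h1, h2⟩ := hprops t ht A hAt
    rw [mem_Icc] at ht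
    exact ⟨h1, by omega, by omega⟩
  · -- antichain
    intro A hA B hB hne hsub
    obtain ⟨t, ht, hAt⟩ := mem_biUnion.mp hA
    obtain ⟨s, hs, hBs⟩ := mem_biUnion.mp hB
    have hcA := (hprops t ht A hAt).2
    have hcB := (hprops s hs B hBs).2
    have hts : t < s := by
      have hle := card_le_card hsub
      rcases Nat.lt_or_ge t s with h | h
      · exact h
      · exact absurd (eq_of_subset_of_card_le hsub (by omega)) hne
    rw [mem_Icc] at ht hs
    rw [hmemfam] at hAt hBs
    by_cases hA1 : t ≤ w + 1
    · rw [if_pos hA1] at hAt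
      obtain ⟨u, hu', rfl⟩ := mem_image.mp hAt
      rw [mem_Ico] at hu'
      have htag : t - 2 ∈ smallSet w w' t u := by rw [mem_smallSet]; left; rfl
      have htagB := hsub htag
      by_cases hB1 : s ≤ w + 1
      · rw [if_pos hB1] at hBs
        obtain ⟨u2, hu2, rfl⟩ := mem_image.mp hBs
        rw [mem_Ico] at hu2
        rw [mem_smallSet] at htagB
        rcases htagB with h | ⟨h, _⟩ | h <;> omega
      · rw [if_neg hB1] at hBs
        obtain ⟨G, hG, rfl⟩ := mem_image.mp hBs
        rw [mem_powersetCard] at hG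
        rw [mem_union] at htagB
        rcases htagB with h | h
        · have := DshF_lb h; omega
        · have := hG.1 h; rw [mem_Ico] at this; omega
    · rw [if_neg hA1] at hAt
      have hB1 : ¬ s ≤ w + 1 := by omega
      rw [if_neg hB1] at hBs
      obtain ⟨G, hG, rfl⟩ := mem_image.mp hAt
      obtain ⟨G2, hG2, rfl⟩ := mem_image.mp hBs
      rw [mem_powersetCard] at hG hG2
      have hDsub : DshF q w w' (t-w) ⊆ DshF q w w' (s-w) := by
        intro x hx
        have hge := DshF_lb hx
        have := hsub (mem_union_left _ hx)
        rw [mem_union] at this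
        rcases this with h | h
        · exact h
        · have := hG2.1 h; rw [mem_Ico] at this; omega
      rw [DshF_subset_iff] at hDsub
      exact skel_not_subset hq3 (by omega) (by omega) (by omega) hDsub
  · -- counting
    intro p hp
    have hpIcc := hp
    rw [mem_Icc] at hp
    have hsubfam : fam p ⊆ ((Icc 2 K).biUnion fam).filter (fun A => A.card = p) := by
      intro A hA
      rw [mem_filter]
      exact ⟨mem_biUnion.mpr ⟨p, hpIcc, hA⟩, (hprops p hpIcc A hA).2⟩
    refine le_trans ?_ (card_le_card hsubfam)
    have : fam p = if p ≤ w + 1 then smallF m w w' p else bigF q w w' p := by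
      rw [hfam]
    rw [this]
    split_ifs with hcase
    · -- small level: card = m - (w+w'+w-1)
      rw [smallF, card_image_of_injOn]
      · rw [Nat.card_Ico]; omega
      · intro u hu1 u2 hu2 heq
        simp only [mem_coe, mem_Ico] at hu1 hu2
        have : u2 ∈ smallSet w w' p u := by
          rw [heq, mem_smallSet]; right; right; rfl
        rw [mem_smallSet] at this
        rcases this with h | ⟨h1, h2⟩ | h <;> omega
    · -- big level
      rw [bigF, card_image_of_injOn]
      · rw [card_powersetCard, Nat.card_Ico]
        have h5 : w + w' - w = w' := by omega
        rw [h5]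
        exact hC
      · intro G1 hG1 G2 hG2 heq
        dsimp only at heq
        simp only [mem_coe, mem_powersetCard] at hG1 hG2
        have hkey : ∀ x, x ∈ G1 ↔ x ∈ G2 := by
          intro x
          constructor
          · intro hx
            have hx' : x ∈ DshF q w w' (p-w) ∪ G2 := by
              rw [← heq]; exact mem_union_right _ hx
            rw [mem_union] at hx'
            rcases hx' with h | h
            · have := DshF_lb h
              have := hG1.1 hx; rw [mem_Ico] at this; omega
            · exact h
          · intro hx
            have hx' : x ∈ DshF q w w' (p-w) ∪ G1 := by
              rw [heq]; exact mem_union_right _ hx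
            rw [mem_union] at hx'
            rcases hx' with h | h
            · have := DshF_lb h
              have := hG2.1 hx; rw [mem_Ico] at this; omega
            · exact h
        exact ext hkey

/-! ## Transport -/

lemma transport (c v K r : ℕ) (S₀ : Finset (Finset ℕ))
    (h1 : ∀ A ∈ S₀, A ⊆ range v ∧ 2 ≤ A.card ∧ A.card ≤ K)
    (h2 : ∀ A ∈ S₀, ∀ B ∈ S₀, A ≠ B → ¬ A ⊆ B)
    (h3 : ∀ p ∈ Icc 2 K, r ≤ (S₀.filter (fun A => A.card = p)).card) :
    ∃ S : Finset (Finset ℕ),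
      (∀ A ∈ S, A ⊆ Ico c (c+v) ∧ 2 ≤ A.card ∧ A.card ≤ K) ∧
      (∀ A ∈ S, ∀ B ∈ S, A ≠ B → ¬ A ⊆ B) ∧
      (∀ p ∈ Icc 2 K, r ≤ (S.filter (fun A => A.card = p)).card) := by
  have hinj : Function.Injective (· + c) := add_left_injective c
  refine ⟨S₀.image (fun A => A.image (· + c)), ?_, ?_, ?_⟩
  · intro A hA
    obtain ⟨A₀, hA₀, rfl⟩ := mem_image.mp hA
    obtain ⟨hsub, hc1, hc2⟩ := h1 A₀ hA₀
    rw [card_image_of_injective _ hinj]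
    refine ⟨?_, hc1, hc2⟩
    intro x hx
    obtain ⟨y, hy, rfl⟩ := mem_image.mp hx
    have := hsub hy
    rw [mem_range] at this
    rw [mem_Ico]
    omega
  · intro A hA B hB hne hsub
    obtain ⟨A₀, hA₀, rfl⟩ := mem_image.mp hA
    obtain ⟨B₀, hB₀, rfl⟩ := mem_image.mp hB
    have hne₀ : A₀ ≠ B₀ := fun h => hne (by rw [h])
    exact h2 A₀ hA₀ B₀ hB₀ hne₀ ((image_subset_image_iff hinj).mp hsub)
  · intro p hp
    refine le_trans (h3 p hp) ?_
    have hsub : (S₀.filter (fun A => A.card = p)).image (fun A => A.image (· + c)) ⊆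
        (S₀.image (fun A => A.image (· + c))).filter (fun A => A.card = p) := by
      intro A hA
      obtain ⟨A₀, hA₀, rfl⟩ := mem_image.mp hA
      rw [mem_filter] at hA₀
      rw [mem_filter, card_image_of_injective _ hinj]
      exact ⟨mem_image_of_mem _ hA₀.1, hA₀.2⟩
    refine le_trans ?_ (card_le_card hsub)
    rw [card_image_of_injOn]
    exact fun A _ B _ h => Finset.image_injective hinj h

/-! ## Stage 1 : full construction on `range n` -/

lemma stage1 (n r w' : ℕ) (hr : 2 ≤ r) (hw4 : 4 ≤ w')
    (hC : r ≤ w'.choose (w'/2)) (hn : 2*r + 2*w' + 2 ≤ n) :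
    ∃ FN : Finset (Finset ℕ),
      (∀ A ∈ FN, A ⊆ range n) ∧
      (∀ A ∈ FN, ∀ B ∈ FN, A ≠ B → ¬ A ⊆ B) ∧
      (∀ t ∈ Icc 2 (n-2), r ≤ (FN.filter (fun A => A.card = t)).card) := by
  obtain ⟨v, hvdef⟩ : ∃ x, x = n - 1 - r := ⟨_, rfl⟩
  obtain ⟨M, hMdef⟩ : ∃ x, x = n / 2 := ⟨_, rfl⟩
  obtain ⟨K₁, hK₁def⟩ : ∃ x, x = M - 1 := ⟨_, rfl⟩
  obtain ⟨K₂, hK₂def⟩ : ∃ x, x = n - 2 - M := ⟨_, rfl⟩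
  have hn14 : 14 ≤ n := by omega
  have hMn : 2*M ≤ n ∧ n ≤ 2*M + 1 := by omega
  have hKM : K₁ + 1 = M ∧ K₂ + M + 2 = n := by omega
  have hv : v + r + 1 = n := by omega
  -- apply pbot for the two halves
  obtain ⟨S₀, hS₀1, hS₀2, hS₀3⟩ := pbot v K₁ r w' hr hw4 hC (by omega) (by omega) (by omega)
  obtain ⟨C₀, hC₀1, hC₀2, hC₀3⟩ := pbot v K₂ r w' hr hw4 hC (by omega) (by omega) (by omega)
  obtain ⟨Sv, hSv1, hSv2, hSv3⟩ := transport (r+1) v K₁ r S₀ hS₀1 hS₀2 hS₀3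
  obtain ⟨Cv, hCv1, hCv2, hCv3⟩ := transport (r+1) v K₂ r C₀ hC₀1 hC₀2 hC₀3
  rw [show r + 1 + v = n by omega] at hSv1 hCv1
  clear hS₀1 hS₀2 hS₀3 hC₀1 hC₀2 hC₀3
  set Bot : Finset (Finset ℕ) := (Icc 1 r).image (fun y => {0, y}) with hBot
  set Top : Finset (Finset ℕ) := (Icc 1 r).image (fun y => (range n) \ {0, y}) with hTop
  set Amid : Finset (Finset ℕ) := Sv.image (insert 0) with hAmid
  set Cmid : Finset (Finset ℕ) := Cv.image (fun C => (Icc 1 r) ∪ ((Ico (r+1) n) \ C)) with hCmid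
  -- basic facts
  have hBotF : ∀ A ∈ Bot, ∃ y, 1 ≤ y ∧ y ≤ r ∧ A = {0, y} := by
    intro A hA
    obtain ⟨y, hy, rfl⟩ := mem_image.mp hA
    rw [mem_Icc] at hy
    exact ⟨y, hy.1, hy.2, rfl⟩
  have hTopF : ∀ A ∈ Top, ∃ y, 1 ≤ y ∧ y ≤ r ∧ A = (range n) \ {0, y} := by
    intro A hA
    obtain ⟨y, hy, rfl⟩ := mem_image.mp hA
    rw [mem_Icc] at hy
    exact ⟨y, hy.1, hy.2, rfl⟩
  have hAmidF : ∀ A ∈ Amid, ∃ S ∈ Sv, A = insert 0 S := by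
    intro A hA
    obtain ⟨S, hS, rfl⟩ := mem_image.mp hA
    exact ⟨S, hS, rfl⟩
  have hCmidF : ∀ A ∈ Cmid, ∃ C ∈ Cv, A = (Icc 1 r) ∪ ((Ico (r+1) n) \ C) := by
    intro A hA
    obtain ⟨C, hC', rfl⟩ := mem_image.mp hA
    exact ⟨C, hC', rfl⟩
  -- cards
  have cBot : ∀ y, 1 ≤ y → y ≤ r → ({0, y} : Finset ℕ).card = 2 := by
    intro y h1 h2
    rw [card_insert_of_notMem (by simp; omega), card_singleton]
  have cTop : ∀ y, 1 ≤ y → y ≤ r → ((range n) \ {0, y} : Finset ℕ).card = n - 2 := by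
    intro y h1 h2
    rw [card_sdiff_of_subset, card_range, cBot y h1 h2]
    intro x hx
    rw [mem_insert, mem_singleton] at hx
    rw [mem_range]
    rcases hx with rfl | rfl <;> omega
  have cAmid : ∀ S ∈ Sv, (insert 0 S).card = S.card + 1 ∧ 3 ≤ (insert 0 S).card ∧
      (insert 0 S).card ≤ M := by
    intro S hS
    obtain ⟨hsub, hc1, hc2⟩ := hSv1 S hS
    have h0 : 0 ∉ S := by
      intro h
      have := hsub h
      rw [mem_Ico] at this
      omega
    rw [card_insert_of_notMem h0]
    omega
  have cCmid : ∀ C ∈ Cv, ((Icc 1 r) ∪ ((Ico (r+1) n) \ C)).card = r + (v - C.card) ∧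
      M + 1 ≤ ((Icc 1 r) ∪ ((Ico (r+1) n) \ C)).card ∧
      ((Icc 1 r) ∪ ((Ico (r+1) n) \ C)).card ≤ n - 3 := by
    intro C hC'
    obtain ⟨hsub, hc1, hc2⟩ := hCv1 C hC'
    have hcd : ((Ico (r+1) n) \ C).card = v - C.card := by
      rw [card_sdiff_of_subset hsub, Nat.card_Ico]
      congr 1
      omega
    have hdisj : Disjoint (Icc 1 r) ((Ico (r+1) n) \ C) := by
      rw [disjoint_left]
      intro x hx hx2
      rw [mem_Icc] at hx
      have := (mem_sdiff.mp hx2).1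
      rw [mem_Ico] at this
      omega
    rw [card_union_of_disjoint hdisj, Nat.card_Icc, hcd]
    have : C.card ≤ v := le_trans (card_le_card hsub) (by rw [Nat.card_Ico]; omega)
    omega
  refine ⟨Bot ∪ Top ∪ Amid ∪ Cmid, ?_, ?_, ?_⟩
  · -- subset of range n
    intro A hA
    simp only [mem_union] at hA
    rcases hA with ((hA | hA) | hA) | hA
    · obtain ⟨y, h1, h2, rfl⟩ := hBotF A hA
      intro x hx
      rw [mem_insert, mem_singleton] at hx
      rw [mem_range]
      rcases hx with rfl | rfl <;> omega
    · obtain ⟨y, h1, h2, rfl⟩ := hTopF A hA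
      exact sdiff_subset
    · obtain ⟨S, hS, rfl⟩ := hAmidF A hA
      intro x hx
      rw [mem_insert] at hx
      rcases hx with rfl | hx
      · rw [mem_range]; omega
      · have := (hSv1 S hS).1 hx
        rw [mem_Ico] at this
        rw [mem_range]
        omega
    · obtain ⟨C, hC', rfl⟩ := hCmidF A hA
      intro x hx
      rw [mem_union] at hx
      rw [mem_range]
      rcases hx with hx | hx
      · rw [mem_Icc] at hx; omega
      · have := (mem_sdiff.mp hx).1
        rw [mem_Ico] at this
        omega
  · -- antichain
    intro A hA B hB hne hsub
    have hlt : A.card < B.card := by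
      have h1 := card_le_card hsub
      rcases Nat.lt_or_ge A.card B.card with h | h
      · exact h
      · exact absurd (eq_of_subset_of_card_le hsub h) hne
    simp only [mem_union] at hA hB
    rcases hA with ((hA | hA) | hA) | hA
    -- A ∈ Bot
    · obtain ⟨y, h1, h2, rfl⟩ := hBotF A hA
      have h0A : (0:ℕ) ∈ ({0, y} : Finset ℕ) := by simp
      have hyA : y ∈ ({0, y} : Finset ℕ) := by simp
      rcases hB with ((hB | hB) | hB) | hB
      · obtain ⟨y2, g1, g2, rfl⟩ := hBotF B hB
        have := cBot y h1 h2
        have := cBot y2 g1 g2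
        omega
      · obtain ⟨y2, g1, g2, rfl⟩ := hTopF B hB
        have := hsub h0A
        rw [mem_sdiff] at this
        exact this.2 (by simp)
      · obtain ⟨S, hS, rfl⟩ := hAmidF B hB
        have := hsub hyA
        rw [mem_insert] at this
        rcases this with h | h
        · omega
        · have := (hSv1 S hS).1 h
          rw [mem_Ico] at this
          omega
      · obtain ⟨C, hC', rfl⟩ := hCmidF B hB
        have := hsub h0A
        rw [mem_union] at this
        rcases this with h | h
        · rw [mem_Icc] at h; omega
        · have := (mem_sdiff.mp h).1
          rw [mem_Ico] at this
          omega
    -- A ∈ Top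
    · obtain ⟨y, h1, h2, rfl⟩ := hTopF A hA
      have hcA := cTop y h1 h2
      have hcB : B.card ≤ n - 2 := by
        rcases hB with ((hB | hB) | hB) | hB
        · obtain ⟨y2, g1, g2, rfl⟩ := hBotF B hB
          rw [cBot y2 g1 g2]; omega
        · obtain ⟨y2, g1, g2, rfl⟩ := hTopF B hB
          rw [cTop y2 g1 g2]
        · obtain ⟨S, hS, rfl⟩ := hAmidF B hB
          have := (cAmid S hS).2.2; omega
        · obtain ⟨C, hC', rfl⟩ := hCmidF B hB
          have := (cCmid C hC').2.2; omega
      omega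
    -- A ∈ Amid
    · obtain ⟨S, hS, rfl⟩ := hAmidF A hA
      have h0A : (0:ℕ) ∈ insert 0 S := mem_insert_self _ _
      rcases hB with ((hB | hB) | hB) | hB
      · obtain ⟨y2, g1, g2, rfl⟩ := hBotF B hB
        have := (cAmid S hS).2.1
        have := cBot y2 g1 g2
        omega
      · obtain ⟨y2, g1, g2, rfl⟩ := hTopF B hB
        have := hsub h0A
        rw [mem_sdiff] at this
        exact this.2 (by simp)
      · obtain ⟨S', hS', rfl⟩ := hAmidF B hB
        have hSS' : S ≠ S' := by
          intro h; exact hne (by rw [h])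
        have hsub' : S ⊆ S' := by
          intro x hx
          have hx1 := (hSv1 S hS).1 hx
          rw [mem_Ico] at hx1
          have := hsub (mem_insert_of_mem hx)
          rw [mem_insert] at this
          rcases this with rfl | h
          · omega
          · exact h
        exact hSv2 S hS S' hS' hSS' hsub'
      · obtain ⟨C, hC', rfl⟩ := hCmidF B hB
        have := hsub h0A
        rw [mem_union] at this
        rcases this with h | h
        · rw [mem_Icc] at h; omega
        · have := (mem_sdiff.mp h).1
          rw [mem_Ico] at this
          omega
    -- A ∈ Cmid
    · obtain ⟨C, hC', rfl⟩ := hCmidF A hA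
      have hcA := (cCmid C hC').2.1
      rcases hB with ((hB | hB) | hB) | hB
      · obtain ⟨y2, g1, g2, rfl⟩ := hBotF B hB
        have := cBot y2 g1 g2
        omega
      · obtain ⟨y2, g1, g2, rfl⟩ := hTopF B hB
        have hy2 : y2 ∈ (Icc 1 r) ∪ ((Ico (r+1) n) \ C) := by
          rw [mem_union]; left; rw [mem_Icc]; omega
        have := hsub hy2
        rw [mem_sdiff] at this
        exact this.2 (by simp)
      · obtain ⟨S', hS', rfl⟩ := hAmidF B hB
        have := (cAmid S' hS').2.2
        omega
      · obtain ⟨C', hC2', rfl⟩ := hCmidF B hB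
        have hCC' : C' ≠ C := by
          intro h; exact hne (by rw [h])
        have hsub' : C' ⊆ C := by
          intro x hx
          have hx1 := (hCv1 C' hC2').1 hx
          rw [mem_Ico] at hx1
          by_contra hxC
          have hxA : x ∈ (Icc 1 r) ∪ ((Ico (r+1) n) \ C) := by
            rw [mem_union]; right; rw [mem_sdiff, mem_Ico]
            exact ⟨⟨hx1.1, hx1.2⟩, hxC⟩
          have := hsub hxA
          rw [mem_union] at this
          rcases this with h | h
          · rw [mem_Icc] at h; omega
          · exact (mem_sdiff.mp h).2 hx
        exact hCv2 C' hC2' C hC' hCC' hsub'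
  · -- counting
    intro t ht
    rw [mem_Icc] at ht
    have hmemF : ∀ X, X ∈ Bot ∨ X ∈ Top ∨ X ∈ Amid ∨ X ∈ Cmid →
        X ∈ Bot ∪ Top ∪ Amid ∪ Cmid := by
      intro X hX
      simp only [mem_union]
      tauto
    rcases Nat.lt_or_ge t 3 with ht2 | ht3
    · -- t = 2 : use Bot
      have ht2' : t = 2 := by omega
      subst ht2'
      have hsub2 : Bot ⊆ (Bot ∪ Top ∪ Amid ∪ Cmid).filter (fun A => A.card = 2) := by
        intro A hA
        rw [mem_filter]
        obtain ⟨y, h1, h2, rfl⟩ := hBotF A hA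
        exact ⟨hmemF _ (Or.inl hA), cBot y h1 h2⟩
      refine le_trans ?_ (card_le_card hsub2)
      rw [hBot, card_image_of_injOn]
      · rw [Nat.card_Icc]; omega
      · intro y1 hy1 y2 hy2 heq
        dsimp only at heq
        simp only [mem_coe, mem_Icc] at hy1 hy2
        have : y2 ∈ ({0, y1} : Finset ℕ) := by rw [heq]; simp
        rw [mem_insert, mem_singleton] at this
        omega
    rcases Nat.lt_or_ge t (M+1) with htM | htM
    · -- 3 ≤ t ≤ M : use Amid
      have hsubA : (Sv.filter (fun A => A.card = t - 1)).image (insert 0) ⊆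
          (Bot ∪ Top ∪ Amid ∪ Cmid).filter (fun A => A.card = t) := by
        intro A hA
        obtain ⟨S, hS, rfl⟩ := mem_image.mp hA
        rw [mem_filter] at hS
        rw [mem_filter]
        constructor
        · exact hmemF _ (Or.inr (Or.inr (Or.inl (mem_image_of_mem _ hS.1))))
        · have := (cAmid S hS.1).1
          omega
      refine le_trans ?_ (card_le_card hsubA)
      rw [card_image_of_injOn]
      · refine hSv3 (t-1) ?_
        rw [mem_Icc]
        omega
      · intro S1 hS1 S2 hS2 heq
        simp only [mem_coe, mem_filter] at hS1 hS2
        have h01 : 0 ∉ S1 := fun h => by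
          have := (hSv1 S1 hS1.1).1 h; rw [mem_Ico] at this; omega
        have h02 : 0 ∉ S2 := fun h => by
          have := (hSv1 S2 hS2.1).1 h; rw [mem_Ico] at this; omega
        have : S1 = (insert 0 S1).erase 0 := by rw [erase_insert h01]
        rw [this, heq, erase_insert h02]
    rcases Nat.lt_or_ge t (n-2) with htn | htn
    · -- M+1 ≤ t ≤ n-3 : use Cmid
      have hcardC : ∀ C ∈ Cv, C.card = n - 1 - t →
          ((Icc 1 r) ∪ ((Ico (r+1) n) \ C)).card = t := by
        intro C hC' hcc
        have := (cCmid C hC').1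
        have hb := (hCv1 C hC').2
        rw [this, hcc]
        omega
      have hsubC : ((Cv.filter (fun A => A.card = n - 1 - t)).image
            (fun C => (Icc 1 r) ∪ ((Ico (r+1) n) \ C))) ⊆
          (Bot ∪ Top ∪ Amid ∪ Cmid).filter (fun A => A.card = t) := by
        intro A hA
        obtain ⟨C, hC', rfl⟩ := mem_image.mp hA
        rw [mem_filter] at hC'
        rw [mem_filter]
        exact ⟨hmemF _ (Or.inr (Or.inr (Or.inr (mem_image_of_mem _ hC'.1)))),
          hcardC C hC'.1 hC'.2⟩
      refine le_trans ?_ (card_le_card hsubC)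
      rw [card_image_of_injOn]
      · refine hCv3 (n-1-t) ?_
        rw [mem_Icc]
        omega
      · intro C1 hC1 C2 hC2 heq
        dsimp only at heq
        simp only [mem_coe, mem_filter] at hC1 hC2
        have hs1 := (hCv1 C1 hC1.1).1
        have hs2 := (hCv1 C2 hC2.1).1
        apply ext
        intro x
        constructor
        · intro hx
          have hx1 := hs1 hx
          rw [mem_Ico] at hx1
          by_contra hxC
          have : x ∈ (Icc 1 r) ∪ ((Ico (r+1) n) \ C2) := by
            rw [mem_union]; right; rw [mem_sdiff, mem_Ico]
            exact ⟨⟨hx1.1, hx1.2⟩, hxC⟩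
          rw [← heq, mem_union] at this
          rcases this with h | h
          · rw [mem_Icc] at h; omega
          · exact (mem_sdiff.mp h).2 hx
        · intro hx
          have hx1 := hs2 hx
          rw [mem_Ico] at hx1
          by_contra hxC
          have : x ∈ (Icc 1 r) ∪ ((Ico (r+1) n) \ C1) := by
            rw [mem_union]; right; rw [mem_sdiff, mem_Ico]
            exact ⟨⟨hx1.1, hx1.2⟩, hxC⟩
          rw [heq, mem_union] at this
          rcases this with h | h
          · rw [mem_Icc] at h; omega
          · exact (mem_sdiff.mp h).2 hx
    · -- t = n - 2 : use Top
      have ht' : t = n - 2 := by omega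
      subst ht'
      have hsubT : Top ⊆ (Bot ∪ Top ∪ Amid ∪ Cmid).filter (fun A => A.card = n - 2) := by
        intro A hA
        rw [mem_filter]
        obtain ⟨y, h1, h2, rfl⟩ := hTopF A hA
        exact ⟨hmemF _ (Or.inr (Or.inl hA)), cTop y h1 h2⟩
      refine le_trans ?_ (card_le_card hsubT)
      rw [hTop, card_image_of_injOn]
      · rw [Nat.card_Icc]; omega
      · intro y1 hy1 y2 hy2 heq
        dsimp only at heq
        simp only [mem_coe, mem_Icc] at hy1 hy2
        have hy2n : y2 ∈ range n := by rw [mem_range]; omega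
        by_contra hne'
        have : y2 ∈ (range n) \ {0, y1} := by
          rw [mem_sdiff]
          refine ⟨hy2n, ?_⟩
          rw [mem_insert, mem_singleton]
          push_neg
          omega
        rw [heq, mem_sdiff] at this
        exact this.2 (by simp)

lemma numeric (r n : ℕ) (hr : 2 ≤ r)
    (hn : (n : ℝ) ≥ 2 * r + 2 * Real.logb 2 r + Real.logb 2 (Real.logb 2 r) + 15) :
    ∃ w' : ℕ, 4 ≤ w' ∧ r ≤ w'.choose (w'/2) ∧ 2*r + 2*w' + 2 ≤ n := by
  have hrpos : (0:ℝ) < (r:ℝ) := by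
    have : (2:ℝ) ≤ (r:ℝ) := by exact_mod_cast hr
    linarith
  set x := Real.logb 2 r with hxdef
  have hx1 : (1:ℝ) ≤ x := by
    rw [hxdef]
    calc (1:ℝ) = Real.logb 2 2 := (Real.logb_self_eq_one one_lt_two).symm
    _ ≤ Real.logb 2 r := Real.logb_le_logb_of_le one_lt_two two_pos (by exact_mod_cast hr)
  have hlog2 : (0.6931471803 : ℝ) < Real.log 2 := Real.log_two_gt_d9
  have hxlog : Real.logb 2 x ≤ 1.5 * x := by
    have hlx : Real.log x ≤ x - 1 := Real.log_le_sub_one_of_pos (by linarith)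
    rw [Real.logb, div_le_iff₀ (by linarith)]
    nlinarith [mul_le_mul_of_nonneg_left hlog2.le (by linarith : (0:ℝ) ≤ 1.5 * x)]
  have hlogxnn : 0 ≤ Real.logb 2 x := Real.logb_nonneg one_lt_two hx1
  set ξ := x + Real.logb 2 x / 2 with hξdef
  have hξ1 : (1:ℝ) ≤ ξ := by rw [hξdef]; linarith
  obtain ⟨w', hw'def⟩ : ∃ y, y = ⌈ξ⌉₊ + 3 := ⟨_, rfl⟩
  have hw'lo : ξ + 3 ≤ (w' : ℝ) := by
    rw [hw'def]; push_cast
    linarith [Nat.le_ceil ξ]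
  have hw'hi : (w' : ℝ) ≤ ξ + 4 := by
    rw [hw'def]; push_cast
    linarith [Nat.ceil_lt_add_one (by linarith : (0:ℝ) ≤ ξ)]
  have hw4 : 4 ≤ w' := by
    have : 1 ≤ ⌈ξ⌉₊ := Nat.one_le_ceil_iff.mpr (by linarith)
    omega
  refine ⟨w', hw4, ?_, ?_⟩
  · -- binomial bound
    obtain ⟨a, hadef⟩ : ∃ y, y = w'/2 := ⟨_, rfl⟩
    rw [← hadef]
    have ha2 : 2 ≤ a := by omega
    have h2a : 2*a ≤ w' := by omega
    have h2a1 : w' ≤ 2*a + 1 := by omega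
    have hapos : (0:ℝ) < (a:ℝ) := by exact_mod_cast (by omega : 0 < a)
    have hsqa : (0:ℝ) < Real.sqrt a := Real.sqrt_pos.mpr hapos
    set C : ℕ := Nat.centralBinom a with hCdef
    have hCpos : (0:ℝ) < (C:ℝ) := by
      exact_mod_cast Nat.centralBinom_pos a
    -- Step A : 4^a ≤ 2√a · C
    have stepA : (4:ℝ)^a ≤ 2 * Real.sqrt a * C := by
      have hsq : ((4:ℝ)^a)^2 ≤ (2 * Real.sqrt a * C)^2 := by
        have e1 : ((4:ℝ)^a)^2 = (16:ℝ)^a := by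
          rw [← pow_mul, mul_comm, pow_mul]
          norm_num
        have e2 : (2 * Real.sqrt a * (C:ℝ))^2 = 4 * a * C^2 := by
          rw [mul_pow, mul_pow, Real.sq_sqrt hapos.le]
          ring
        rw [e1, e2]
        exact_mod_cast sixteen_pow_le a (by omega)
      calc (4:ℝ)^a = Real.sqrt (((4:ℝ)^a)^2) := (Real.sqrt_sq (by positivity)).symm
        _ ≤ Real.sqrt ((2 * Real.sqrt a * C)^2) := Real.sqrt_le_sqrt hsq
        _ = 2 * Real.sqrt a * C := Real.sqrt_sq (by positivity)
    -- Step B : 4·r·√x ≤ 4^a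
    have h2x : (2:ℝ) ^ x = r := Real.rpow_logb two_pos (by norm_num) hrpos
    have h2lx : (2:ℝ) ^ (Real.logb 2 x / 2) = Real.sqrt x := by
      rw [div_eq_mul_one_div, Real.rpow_mul (by norm_num), Real.rpow_logb two_pos (by norm_num) (by linarith)]
      rw [Real.sqrt_eq_rpow]
    have hw'rpow : 8 * r * Real.sqrt x ≤ (2:ℝ) ^ (w':ℝ) := by
      have : (2:ℝ) ^ (ξ + 3 : ℝ) ≤ (2:ℝ) ^ (w':ℝ) :=
        Real.rpow_le_rpow_of_exponent_le one_le_two hw'lo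
      refine le_trans (le_of_eq ?_) this
      rw [hξdef, Real.rpow_add two_pos, Real.rpow_add two_pos, h2x, h2lx]
      have : (2:ℝ) ^ (3:ℝ) = 8 := by
        rw [show (3:ℝ) = ((3:ℕ):ℝ) by norm_num, Real.rpow_natCast]
        norm_num
      rw [this]
      ring
    have hpow2a : (2:ℝ) ^ ((2*a : ℕ):ℝ) = (4:ℝ)^a := by
      rw [Real.rpow_natCast, pow_mul]
      norm_num
    have stepB : 4 * r * Real.sqrt x ≤ (4:ℝ)^a := by
      have h1 : ((w':ℝ) - 1) ≤ ((2*a : ℕ):ℝ) := by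
        push_cast
        have : (w' : ℝ) ≤ 2*(a:ℝ) + 1 := by exact_mod_cast h2a1
        linarith
      have h2 : (2:ℝ) ^ ((w':ℝ) - 1) ≤ (2:ℝ) ^ ((2*a : ℕ):ℝ) :=
        Real.rpow_le_rpow_of_exponent_le one_le_two h1
      rw [hpow2a] at h2
      refine le_trans ?_ h2
      rw [Real.rpow_sub two_pos, Real.rpow_one]
      linarith [hw'rpow]
    -- √a ≤ 2√x
    have haux : (a:ℝ) ≤ 4 * x := by
      have h1 : (a:ℝ) ≤ (w':ℝ)/2 := by
        have : ((2*a : ℕ):ℝ) ≤ (w':ℝ) := by exact_mod_cast h2a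
        push_cast at this
        linarith
      rw [hξdef] at hw'hi
      linarith
    have hsqax : Real.sqrt a ≤ 2 * Real.sqrt x := by
      have h1 : Real.sqrt a ≤ Real.sqrt (4*x) := Real.sqrt_le_sqrt haux
      have h2 : Real.sqrt (4*x) = 2 * Real.sqrt x := by
        rw [show (4:ℝ)*x = 2^2 * x by ring, Real.sqrt_mul (by positivity), Real.sqrt_sq (by norm_num)]
      linarith
    -- combine
    have hCle : (C:ℝ) ≤ (w'.choose a : ℝ) := by
      exact_mod_cast Nat.choose_le_choose a h2a
    have hsqxpos : (0:ℝ) < Real.sqrt x := Real.sqrt_pos.mpr (by linarith)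
    have final : (r:ℝ) * (2 * Real.sqrt a) ≤ (w'.choose a : ℝ) * (2 * Real.sqrt a) := by
      calc (r:ℝ) * (2 * Real.sqrt a) ≤ (r:ℝ) * (2 * (2 * Real.sqrt x)) := by
            have : (0:ℝ) ≤ (r:ℝ) := hrpos.le
            nlinarith
        _ = 4 * r * Real.sqrt x := by ring
        _ ≤ (4:ℝ)^a := stepB
        _ ≤ 2 * Real.sqrt a * C := stepA
        _ ≤ 2 * Real.sqrt a * (w'.choose a : ℝ) := by nlinarith
        _ = (w'.choose a : ℝ) * (2 * Real.sqrt a) := by ring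
    have : (r:ℝ) ≤ (w'.choose a : ℝ) :=
      le_of_mul_le_mul_right final (by positivity)
    exact_mod_cast this
  · -- size bound
    have hreal : ((2*r + 2*w' + 2 : ℕ) : ℝ) ≤ (n:ℝ) := by
      push_cast
      rw [hξdef] at hw'hi
      linarith
    exact_mod_cast hreal

/-! ## Final theorem -/

theorem stmt_13 (r n : ℕ) (hr : 2 ≤ r)
    (hn : (n : ℝ) ≥ 2 * r + 2 * Real.logb 2 r + Real.logb 2 (Real.logb 2 r) + 15) :
    ∃ F : Finset (Finset (Fin n)),
      (∀ A ∈ F, ∀ B ∈ F, A ≠ B → ¬ A ⊆ B) ∧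
      (∀ t ∈ Finset.Icc 2 (n - 2),
        r ≤ (F.filter (fun A => A.card = t)).card) := by
  obtain ⟨w', hw4, hC, hn'⟩ := numeric r n hr hn
  obtain ⟨FN, hFN1, hFN2, hFN3⟩ := stage1 n r w' hr hw4 hC hn'
  set toF : Finset ℕ → Finset (Fin n) :=
    fun A => Finset.univ.filter (fun i : Fin n => (i:ℕ) ∈ A) with htoF
  have hmem : ∀ (A : Finset ℕ) (i : Fin n), i ∈ toF A ↔ (i:ℕ) ∈ A := by
    intro A i
    rw [htoF]
    simp
  have hcard : ∀ A : Finset ℕ, A ⊆ range n → (toF A).card = A.card := by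
    intro A hA
    refine Finset.card_bij (fun i _ => (i : ℕ)) ?_ ?_ ?_
    · intro i hi
      exact (hmem A i).mp hi
    · intro i hi j hj hij
      exact Fin.val_injective hij
    · intro b hb
      have hbn : b < n := by
        have := hA hb
        rwa [mem_range] at this
      exact ⟨⟨b, hbn⟩, (hmem A _).mpr hb, rfl⟩
  have hsub : ∀ A B : Finset ℕ, A ⊆ range n → toF A ⊆ toF B → A ⊆ B := by
    intro A B hA h x hx
    have hxn : x < n := by
      have := hA hx
      rwa [mem_range] at this
    have := h ((hmem A ⟨x, hxn⟩).mpr hx)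
    exact (hmem B ⟨x, hxn⟩).mp this
  have hinj : ∀ A ∈ FN, ∀ B ∈ FN, toF A = toF B → A = B := by
    intro A hA B hB h
    exact Finset.Subset.antisymm (hsub A B (hFN1 A hA) (le_of_eq h))
      (hsub B A (hFN1 B hB) (le_of_eq h.symm))
  refine ⟨FN.image toF, ?_, ?_⟩
  · intro A' hA' B' hB' hne hss
    obtain ⟨A, hA, rfl⟩ := mem_image.mp hA'
    obtain ⟨B, hB, rfl⟩ := mem_image.mp hB'
    have hAB : A ≠ B := fun h => hne (by rw [h])
    exact hFN2 A hA B hB hAB (hsub A B (hFN1 A hA) hss)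
  · intro t ht
    have hsubF : (FN.filter (fun A => A.card = t)).image toF ⊆
        (FN.image toF).filter (fun A => A.card = t) := by
      intro A' hA'
      obtain ⟨A, hA, rfl⟩ := mem_image.mp hA'
      rw [mem_filter] at hA
      rw [mem_filter]
      refine ⟨mem_image_of_mem _ hA.1, ?_⟩
      rw [hcard A (hFN1 A hA.1)]
      exact hA.2
    refine le_trans ?_ (card_le_card hsubF)
    rw [card_image_of_injOn]
    · exact hFN3 t ht
    · intro A hA B hB h
      simp only [mem_coe, mem_filter] at hA hB
      exact hinj A hA.1 B hB.1 h
end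

section
/- Every 3-multiplicity antichain F ⊆ 2^[8] with 1 ∈ S(F) satisfies S(F) ⊆ {1, 2, 3, 4}; in particular |S(F)| ≤ 4. -/
/-!
Three singletons `{a}, {b}, {c}` lie in `F`, and no other member of an antichain can contain
`a`, `b` or `c`. So every layer `F_t` with `t ≠ 1` consists of `t`-subsets of a set of at most
`8 - 3 = 5` points, and there is at most one of those when `t = 0` or `t ≥ 5`.
-/

open Finset

theorem Nat.choose_le_one_of_le {n k : ℕ} (h : n ≤ k) : n.choose k ≤ 1 := by
  rcases h.lt_or_eq with hlt | rfl
  · simp [Nat.choose_eq_zero_of_lt hlt]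
  · simp

namespace Finset

variable {α : Type*} {F : Finset (Finset α)}

theorem notMem_of_singleton_mem_of_isAntichain (hF : IsAntichain (· ⊆ ·) (F : Set (Finset α)))
    {A : Finset α} (hA : A ∈ F) (hA1 : A.card ≠ 1) {x : α} (hx : {x} ∈ F) : x ∉ A :=
  fun hxA => hF hx hA (by rintro rfl; simp at hA1) (singleton_subset_iff.2 hxA)

variable [DecidableEq α] [Fintype α]

theorem filter_card_eq_subset_powersetCard_of_isAntichain
    (hF : IsAntichain (· ⊆ ·) (F : Set (Finset α))) {t : ℕ} (ht : t ≠ 1) :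
    F.filter (fun A => A.card = t) ⊆ powersetCard t (univ.filter fun x => {x} ∉ F) := by
  intro A hA
  obtain ⟨hAF, rfl⟩ := mem_filter.1 hA
  refine mem_powersetCard.2 ⟨fun x hxA => mem_filter.2 ⟨mem_univ x, fun hx => ?_⟩, rfl⟩
  exact notMem_of_singleton_mem_of_isAntichain hF hAF ht hx hxA

theorem map_filter_singleton_mem :
    (univ.filter fun x => {x} ∈ F).map ⟨singleton, singleton_injective⟩ =
      F.filter (fun A => A.card = 1) := by
  ext A
  simp only [mem_map, mem_filter, mem_univ, true_and, Function.Embedding.coeFn_mk,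
    card_eq_one]
  constructor
  · rintro ⟨x, hx, rfl⟩
    exact ⟨hx, x, rfl⟩
  · rintro ⟨hA, x, rfl⟩
    exact ⟨x, hA, rfl⟩

theorem card_filter_singleton_notMem :
    (univ.filter fun x => {x} ∉ F).card =
      Fintype.card α - (F.filter (fun A => A.card = 1)).card := by
  rw [← map_filter_singleton_mem, card_map, filter_not, card_sdiff_of_subset (filter_subset _ _),
    card_univ]

theorem card_filter_card_eq_le_choose_of_isAntichain
    (hF : IsAntichain (· ⊆ ·) (F : Set (Finset α))) {t : ℕ} (ht : t ≠ 1) :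
    (F.filter (fun A => A.card = t)).card ≤
      (Fintype.card α - (F.filter (fun A => A.card = 1)).card).choose t := by
  rw [← card_filter_singleton_notMem, ← card_powersetCard]
  exact card_le_card (filter_card_eq_subset_powersetCard_of_isAntichain hF ht)

end Finset

theorem stmt_18 (F : Finset (Finset (Fin 8)))
    (hanti : ∀ A ∈ F, ∀ B ∈ F, A ≠ B → ¬ A ⊆ B)
    (hmult : ∀ t ∈ F.image Finset.card,
      3 ≤ (F.filter (fun A => A.card = t)).card)
    (h1 : 1 ∈ F.image Finset.card) :
    F.image Finset.card ⊆ ({1, 2, 3, 4} : Finset ℕ) := by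
  intro t ht
  by_contra hsmall
  simp only [mem_insert, mem_singleton, not_or] at hsmall
  obtain ⟨ht1, ht2, ht3, ht4⟩ := hsmall
  have hlayer := card_filter_card_eq_le_choose_of_isAntichain hanti ht1
  rw [Fintype.card_fin] at hlayer
  have hsingletons := hmult 1 h1
  have hchoose : (8 - (F.filter (fun A => A.card = 1)).card).choose t ≤ 1 := by
    rcases Nat.eq_zero_or_pos t with rfl | htpos
    · simp
    · exact Nat.choose_le_one_of_le (by omega)
  have := hmult t ht
  omega
end

section
/- Let r ≥ 8 and suppose n ≥ 2r + 2·log₂ r + log₂ log₂ r + 15 with n ≥ 8r, and let k = ⌊n/2⌋. If m is the least integer with C(m, ⌊m/2⌋) ≥ k, then k ≥ r + m + 1. -/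
/-!
Since `n ≥ 8r`, we have `k ≥ 4r`, so `t := k - r - 1` is at least `8` and `k ≤ 2t`. The central
binomial coefficient grows exponentially, so `C(t, ⌊t/2⌋) ≥ 2t ≥ k` and minimality gives `m ≤ t`.
-/

theorem Nat.mul_four_mul_add_two_le_four_pow {s : ℕ} (hs : 4 ≤ s) : s * (4 * s + 2) ≤ 4 ^ s := by
  induction s, hs using Nat.le_induction with
  | base => norm_num
  | succ s hs ih => rw [pow_succ]; nlinarith

theorem Nat.four_mul_add_two_le_centralBinom {s : ℕ} (hs : 4 ≤ s) :
    4 * s + 2 ≤ s.centralBinom :=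
  Nat.le_of_mul_le_mul_left
    ((Nat.mul_four_mul_add_two_le_four_pow hs).trans (Nat.four_pow_lt_mul_centralBinom s hs).le)
    (by omega)

theorem Nat.two_mul_le_choose_half {t : ℕ} (ht : 8 ≤ t) : 2 * t ≤ t.choose (t / 2) :=
  calc 2 * t ≤ 4 * (t / 2) + 2 := by omega
    _ ≤ (t / 2).centralBinom := Nat.four_mul_add_two_le_centralBinom (by omega)
    _ ≤ t.choose (t / 2) := Nat.choose_le_choose _ (by omega)

theorem stmt_19_general (r n k m : ℕ) (hr : 8 ≤ r)
    (hn8 : 8 * r ≤ n) (hk : k = n / 2)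
    (hleast : ∀ m' : ℕ, k ≤ m'.choose (m' / 2) → m ≤ m') :
    r + m + 1 ≤ k := by
  have hk4 : 4 * r ≤ k := by omega
  have hchoose : k ≤ (k - r - 1).choose ((k - r - 1) / 2) :=
    le_trans (by omega) (Nat.two_mul_le_choose_half (by omega))
  have := hleast _ hchoose
  omega

theorem stmt_19 (r n k m : ℕ) (hr : 8 ≤ r)
    (hn : (n : ℝ) ≥ 2 * r + 2 * Real.logb 2 r + Real.logb 2 (Real.logb 2 r) + 15)
    (hn8 : 8 * r ≤ n) (hk : k = n / 2)
    (hge : k ≤ m.choose (m / 2))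
    (hleast : ∀ m' : ℕ, k ≤ m'.choose (m' / 2) → m ≤ m') :
    r + m + 1 ≤ k :=
  stmt_19_general r n k m hr hn8 hk hleast
end
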